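/- arXiv:1612.08521 — 5 statements merged into one kernel-verified Lean document; each statement's English description precedes it below -/
import Mathlib

section
/- Let $F:\mathbb{R}^3\to\mathbb{R}^3$ be the map $(x,y,z)\mapsto(x-x\wedge y+z,\ y-x\wedge y+z,\ x\wedge y)$, and let $P=P_1\otimes P_2\otimes P_3$ be a product measure on $\mathbb{R}^3$ where $P_1,P_2,P_3$ are exponential distributions with rates $a$, $b$, and $a+b$ respectively, for some $a,b\in(0,\infty)$. Then $P(F^{-1}(B))=P(B)$ for every Borel set $B\subset\mathbb{R}^3$. -/
open MeasureTheory ProbabilityTheory Real Set ENNReal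

namespace BurkeAux

/-- The affine map agreeing with `burkeMap` on `{x ≤ y}`. -/
noncomputable def T1 : ℝ × ℝ × ℝ → ℝ × ℝ × ℝ := fun p => (p.2.2, p.2.1 - p.1 + p.2.2, p.1)

/-- The affine map agreeing with `burkeMap` on `{y < x}`. -/
noncomputable def T2 : ℝ × ℝ × ℝ → ℝ × ℝ × ℝ := fun p => (p.1 - p.2.1 + p.2.2, p.2.2, p.2.1)

lemma mpT1 : MeasurePreserving T1 (volume : Measure (ℝ×ℝ×ℝ)) volume := by
  have h0 : MeasurePreserving (⇑(MeasurableEquiv.prodAssoc : (ℝ×ℝ)×ℝ ≃ᵐ ℝ×ℝ×ℝ).symm)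
      (volume : Measure (ℝ×ℝ×ℝ)) (volume : Measure ((ℝ×ℝ)×ℝ)) :=
    volume_preserving_prodAssoc.symm _
  have h1 : MeasurePreserving (Prod.map (fun q : ℝ×ℝ => (q.1, q.2 - q.1)) (id : ℝ → ℝ))
      (volume : Measure ((ℝ×ℝ)×ℝ)) volume :=
    (measurePreserving_prod_sub (volume : Measure ℝ) volume).prod (MeasurePreserving.id volume)
  have h2 : MeasurePreserving (Prod.swap : (ℝ×ℝ)×ℝ → ℝ×(ℝ×ℝ))
      (volume : Measure ((ℝ×ℝ)×ℝ)) volume :=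
    Measure.measurePreserving_swap
  have h3 : MeasurePreserving (Prod.map (id : ℝ → ℝ) (Prod.swap : ℝ×ℝ → ℝ×ℝ))
      (volume : Measure (ℝ×ℝ×ℝ)) volume :=
    (MeasurePreserving.id volume).prod (Measure.measurePreserving_swap)
  have h5 : MeasurePreserving (Prod.map (fun q : ℝ×ℝ => (q.1, q.1 + q.2)) (id : ℝ → ℝ))
      (volume : Measure ((ℝ×ℝ)×ℝ)) volume :=
    (measurePreserving_prod_add (volume : Measure ℝ) volume).prod (MeasurePreserving.id volume)
  have h6 : MeasurePreserving (⇑(MeasurableEquiv.prodAssoc : (ℝ×ℝ)×ℝ ≃ᵐ ℝ×ℝ×ℝ))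
      (volume : Measure ((ℝ×ℝ)×ℝ)) volume := volume_preserving_prodAssoc
  have hc := h6.comp (h5.comp (h0.comp (h3.comp (h2.comp (h1.comp h0)))))
  have hfun : T1 = ⇑MeasurableEquiv.prodAssoc ∘ (Prod.map (fun q : ℝ×ℝ => (q.1, q.1 + q.2)) id ∘
      (⇑MeasurableEquiv.prodAssoc.symm ∘ (Prod.map id Prod.swap ∘ (Prod.swap ∘
      (Prod.map (fun q : ℝ×ℝ => (q.1, q.2 - q.1)) id ∘ ⇑MeasurableEquiv.prodAssoc.symm))))) := by
    funext p
    simp only [T1, Function.comp_apply, MeasurableEquiv.prodAssoc, MeasurableEquiv.symm,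
      MeasurableEquiv.coe_mk, Equiv.prodAssoc, Equiv.coe_fn_mk, Equiv.coe_fn_symm_mk,
      Prod.map, Prod.swap, id]
    try (refine Prod.ext ?_ (Prod.ext ?_ ?_) <;> simp <;> try ring)
  rw [hfun]; exact hc

lemma mpT2 : MeasurePreserving T2 (volume : Measure (ℝ×ℝ×ℝ)) volume := by
  have h0 : MeasurePreserving (⇑(MeasurableEquiv.prodAssoc : (ℝ×ℝ)×ℝ ≃ᵐ ℝ×ℝ×ℝ).symm)
      (volume : Measure (ℝ×ℝ×ℝ)) (volume : Measure ((ℝ×ℝ)×ℝ)) :=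
    volume_preserving_prodAssoc.symm _
  have h1 : MeasurePreserving (Prod.map (fun q : ℝ×ℝ => (q.1 - q.2, q.2)) (id : ℝ → ℝ))
      (volume : Measure ((ℝ×ℝ)×ℝ)) volume :=
    (measurePreserving_sub_prod (volume : Measure ℝ) volume).prod (MeasurePreserving.id volume)
  have h3 : MeasurePreserving (Prod.map (id : ℝ → ℝ) (Prod.swap : ℝ×ℝ → ℝ×ℝ))
      (volume : Measure (ℝ×ℝ×ℝ)) volume :=
    (MeasurePreserving.id volume).prod (Measure.measurePreserving_swap)
  have h5 : MeasurePreserving (Prod.map (fun q : ℝ×ℝ => (q.1 + q.2, q.2)) (id : ℝ → ℝ))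
      (volume : Measure ((ℝ×ℝ)×ℝ)) volume :=
    (measurePreserving_add_prod (volume : Measure ℝ) volume).prod (MeasurePreserving.id volume)
  have h6 : MeasurePreserving (⇑(MeasurableEquiv.prodAssoc : (ℝ×ℝ)×ℝ ≃ᵐ ℝ×ℝ×ℝ))
      (volume : Measure ((ℝ×ℝ)×ℝ)) volume := volume_preserving_prodAssoc
  have hc := h6.comp (h5.comp (h0.comp (h3.comp (h6.comp (h1.comp h0)))))
  have hfun : T2 = ⇑MeasurableEquiv.prodAssoc ∘ (Prod.map (fun q : ℝ×ℝ => (q.1 + q.2, q.2)) id ∘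
      (⇑MeasurableEquiv.prodAssoc.symm ∘ (Prod.map id Prod.swap ∘ (⇑MeasurableEquiv.prodAssoc ∘
      (Prod.map (fun q : ℝ×ℝ => (q.1 - q.2, q.2)) id ∘ ⇑MeasurableEquiv.prodAssoc.symm))))) := by
    funext p
    simp only [T2, Function.comp_apply, MeasurableEquiv.prodAssoc, MeasurableEquiv.symm,
      MeasurableEquiv.coe_mk, Equiv.prodAssoc, Equiv.coe_fn_mk, Equiv.coe_fn_symm_mk,
      Prod.map, Prod.swap, id]
    try (refine Prod.ext ?_ (Prod.ext ?_ ?_) <;> simp <;> try ring)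
  rw [hfun]; exact hc

lemma aux_withDensity_prod {α β : Type*} [MeasurableSpace α] [MeasurableSpace β]
    (μ : Measure α) (ν : Measure β) [SigmaFinite μ] [SigmaFinite ν]
    {f : α → ℝ≥0∞} {g : β → ℝ≥0∞} (hf : Measurable f) (hg : Measurable g)
    [SigmaFinite (μ.withDensity f)] [SigmaFinite (ν.withDensity g)] :
    (μ.withDensity f).prod (ν.withDensity g)
      = (μ.prod ν).withDensity fun p => f p.1 * g p.2 := by
  refine Measure.prod_eq fun s t hs ht => ?_
  rw [withDensity_apply _ (hs.prod ht), ← Measure.prod_restrict,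
    lintegral_prod_mul hf.aemeasurable hg.aemeasurable,
    withDensity_apply _ hs, withDensity_apply _ ht]

lemma measurable_expPDF (r : ℝ) : Measurable (exponentialPDF r) :=
  (measurable_exponentialPDFReal r).ennreal_ofReal

/-- The joint density of `P`. -/
noncomputable def rho (a b : ℝ) : ℝ × ℝ × ℝ → ℝ≥0∞ := fun p =>
  exponentialPDF a p.1 * (exponentialPDF b p.2.1 * exponentialPDF (a + b) p.2.2)

/-- The density `rho` composed with `T1⁻¹`. -/
noncomputable def rho1 (a b : ℝ) : ℝ × ℝ × ℝ → ℝ≥0∞ := fun q =>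
  exponentialPDF a q.2.2 * (exponentialPDF b (q.2.1 - q.1 + q.2.2) * exponentialPDF (a + b) q.1)

/-- The density `rho` composed with `T2⁻¹`. -/
noncomputable def rho2 (a b : ℝ) : ℝ × ℝ × ℝ → ℝ≥0∞ := fun q =>
  exponentialPDF a (q.1 - q.2.1 + q.2.2) * (exponentialPDF b q.2.2 * exponentialPDF (a + b) q.2.1)

lemma expMeasure_eq (r : ℝ) : expMeasure r = volume.withDensity (exponentialPDF r) := rfl

lemma P_eq (a b : ℝ) (ha : 0 < a) (hb : 0 < b) :
    (expMeasure a).prod ((expMeasure b).prod (expMeasure (a + b)))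
      = (volume : Measure (ℝ × ℝ × ℝ)).withDensity (rho a b) := by
  haveI ia : IsProbabilityMeasure (expMeasure a) := isProbabilityMeasure_expMeasure ha
  haveI ib : IsProbabilityMeasure (expMeasure b) := isProbabilityMeasure_expMeasure hb
  haveI iab : IsProbabilityMeasure (expMeasure (a + b)) :=
    isProbabilityMeasure_expMeasure (by linarith)
  haveI : SigmaFinite ((volume : Measure ℝ).withDensity (exponentialPDF a)) := by
    rw [← expMeasure_eq]; infer_instance
  haveI : SigmaFinite ((volume : Measure ℝ).withDensity (exponentialPDF b)) := by
    rw [← expMeasure_eq]; infer_instance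
  haveI : SigmaFinite ((volume : Measure ℝ).withDensity (exponentialPDF (a + b))) := by
    rw [← expMeasure_eq]; infer_instance
  have h1 : (expMeasure b).prod (expMeasure (a + b))
      = ((volume : Measure ℝ).prod (volume : Measure ℝ)).withDensity
        (fun q : ℝ × ℝ => exponentialPDF b q.1 * exponentialPDF (a + b) q.2) := by
    rw [expMeasure_eq b, expMeasure_eq (a + b)]
    exact aux_withDensity_prod _ _ (measurable_expPDF b) (measurable_expPDF (a + b))
  haveI : SigmaFinite (((volume : Measure ℝ).prod (volume : Measure ℝ)).withDensity
      (fun q : ℝ × ℝ => exponentialPDF b q.1 * exponentialPDF (a + b) q.2)) := by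
    rw [← h1]; infer_instance
  have hg : Measurable (fun q : ℝ × ℝ => exponentialPDF b q.1 * exponentialPDF (a + b) q.2) :=
    ((measurable_expPDF b).comp measurable_fst).mul
      ((measurable_expPDF (a + b)).comp measurable_snd)
  rw [h1, expMeasure_eq a, aux_withDensity_prod _ _ (measurable_expPDF a) hg]
  rfl

lemma exp_pdf_mul {r s t x y z : ℝ} (hr : 0 ≤ r) (hs : 0 ≤ s)
    (hx : 0 ≤ x) (hy : 0 ≤ y) (hz : 0 ≤ z) :
    exponentialPDF r x * (exponentialPDF s y * exponentialPDF t z)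
      = ENNReal.ofReal (r * s * t * Real.exp (-(r * x) + -(s * y) + -(t * z))) := by
  rw [exponentialPDF_of_nonneg hx, exponentialPDF_of_nonneg hy, exponentialPDF_of_nonneg hz,
    ← ENNReal.ofReal_mul (by positivity), ← ENNReal.ofReal_mul (by positivity)]
  congr 1
  rw [Real.exp_add, Real.exp_add]
  ring

lemma density_eq_le {a b u v w : ℝ} (ha : 0 < a) (hb : 0 < b) (h : u ≤ v) :
    exponentialPDF a w * (exponentialPDF b (v - u + w) * exponentialPDF (a + b) u)
      = exponentialPDF a u * (exponentialPDF b v * exponentialPDF (a + b) w) := by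
  rcases lt_or_ge u 0 with hu | hu
  · simp [exponentialPDF_of_neg hu]
  rcases lt_or_ge w 0 with hw | hw
  · simp [exponentialPDF_of_neg hw]
  rw [exp_pdf_mul ha.le hb.le hw (by linarith) hu,
    exp_pdf_mul ha.le hb.le hu (by linarith) hw]
  congr 2
  ring

lemma density_eq_gt {a b u v w : ℝ} (ha : 0 < a) (hb : 0 < b) (h : v ≤ u) :
    exponentialPDF a (u - v + w) * (exponentialPDF b w * exponentialPDF (a + b) v)
      = exponentialPDF a u * (exponentialPDF b v * exponentialPDF (a + b) w) := by
  rcases lt_or_ge v 0 with hv | hv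
  · simp [exponentialPDF_of_neg hv]
  rcases lt_or_ge w 0 with hw | hw
  · simp [exponentialPDF_of_neg hw]
  rw [exp_pdf_mul ha.le hb.le (by linarith) hw hv,
    exp_pdf_mul ha.le hb.le (by linarith) hv hw]
  congr 2
  ring

lemma hsle_meas : MeasurableSet {p : ℝ×ℝ×ℝ | p.1 ≤ p.2.1} :=
  measurableSet_le measurable_fst (measurable_fst.comp measurable_snd)

lemma half_le (a b : ℝ) (ha : 0 < a) (hb : 0 < b) (B : Set (ℝ × ℝ × ℝ))
    (hB : MeasurableSet B) :
    (volume : Measure (ℝ×ℝ×ℝ)).withDensity (rho a b) (T1 ⁻¹' B ∩ {p : ℝ×ℝ×ℝ | p.1 ≤ p.2.1})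
      = (volume : Measure (ℝ×ℝ×ℝ)).withDensity (rho a b) (B ∩ {p : ℝ×ℝ×ℝ | p.1 ≤ p.2.1}) := by
  have hsle := hsle_meas
  have hrho1 : Measurable (rho1 a b) := by
    refine ((measurable_expPDF a).comp (measurable_snd.comp measurable_snd)).mul
      (Measurable.mul ?_ ((measurable_expPDF (a+b)).comp measurable_fst))
    exact (measurable_expPDF b).comp
      (((measurable_fst.comp measurable_snd).sub measurable_fst).add
        (measurable_snd.comp measurable_snd))
  rw [withDensity_apply _ ((mpT1.measurable hB).inter hsle),
    withDensity_apply _ (hB.inter hsle)]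
  have key : ∀ p : ℝ×ℝ×ℝ, (T1 ⁻¹' B ∩ {p : ℝ×ℝ×ℝ | p.1 ≤ p.2.1}).indicator (rho a b) p
      = (B ∩ {p : ℝ×ℝ×ℝ | p.1 ≤ p.2.1}).indicator (rho1 a b) (T1 p) := by
    intro p
    have hmem : T1 p ∈ B ∩ {p : ℝ×ℝ×ℝ | p.1 ≤ p.2.1}
        ↔ p ∈ T1 ⁻¹' B ∩ {p : ℝ×ℝ×ℝ | p.1 ≤ p.2.1} := by
      simp only [mem_inter_iff, mem_preimage, mem_setOf_eq, T1]
      constructor <;> (rintro ⟨h1, h2⟩; exact ⟨h1, by linarith⟩)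
    have hval : rho1 a b (T1 p) = rho a b p := by
      simp only [rho1, rho, T1]
      have : p.2.1 - p.1 + p.2.2 - p.2.2 + p.1 = p.2.1 := by ring
      rw [this]
    by_cases hp : p ∈ T1 ⁻¹' B ∩ {p : ℝ×ℝ×ℝ | p.1 ≤ p.2.1}
    · rw [indicator_of_mem hp, indicator_of_mem (hmem.mpr hp), hval]
    · rw [indicator_of_notMem hp, indicator_of_notMem (fun h => hp (hmem.mp h))]
  calc ∫⁻ p in T1 ⁻¹' B ∩ {p : ℝ×ℝ×ℝ | p.1 ≤ p.2.1}, rho a b p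
      = ∫⁻ p, (T1 ⁻¹' B ∩ {p : ℝ×ℝ×ℝ | p.1 ≤ p.2.1}).indicator (rho a b) p :=
        (lintegral_indicator ((mpT1.measurable hB).inter hsle) _).symm
    _ = ∫⁻ p, (B ∩ {p : ℝ×ℝ×ℝ | p.1 ≤ p.2.1}).indicator (rho1 a b) (T1 p) := by
        exact lintegral_congr key
    _ = ∫⁻ q, (B ∩ {p : ℝ×ℝ×ℝ | p.1 ≤ p.2.1}).indicator (rho1 a b) q :=
        mpT1.lintegral_comp (hrho1.indicator (hB.inter hsle))
    _ = ∫⁻ q in B ∩ {p : ℝ×ℝ×ℝ | p.1 ≤ p.2.1}, rho1 a b q :=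
        lintegral_indicator (hB.inter hsle) _
    _ = ∫⁻ q in B ∩ {p : ℝ×ℝ×ℝ | p.1 ≤ p.2.1}, rho a b q := by
        refine setLIntegral_congr_fun (hB.inter hsle) (fun q hq => ?_)
        exact density_eq_le ha hb hq.2

lemma half_gt (a b : ℝ) (ha : 0 < a) (hb : 0 < b) (B : Set (ℝ × ℝ × ℝ))
    (hB : MeasurableSet B) :
    (volume : Measure (ℝ×ℝ×ℝ)).withDensity (rho a b) (T2 ⁻¹' B ∩ {p : ℝ×ℝ×ℝ | p.1 ≤ p.2.1}ᶜ)
      = (volume : Measure (ℝ×ℝ×ℝ)).withDensity (rho a b) (B ∩ {p : ℝ×ℝ×ℝ | p.1 ≤ p.2.1}ᶜ) := by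
  have hsgt : MeasurableSet {p : ℝ×ℝ×ℝ | p.1 ≤ p.2.1}ᶜ := hsle_meas.compl
  have hrho2 : Measurable (rho2 a b) := by
    refine Measurable.mul ?_
      (((measurable_expPDF b).comp (measurable_snd.comp measurable_snd)).mul
        ((measurable_expPDF (a+b)).comp (measurable_fst.comp measurable_snd)))
    exact (measurable_expPDF a).comp
      ((measurable_fst.sub (measurable_fst.comp measurable_snd)).add
        (measurable_snd.comp measurable_snd))
  rw [withDensity_apply _ ((mpT2.measurable hB).inter hsgt),
    withDensity_apply _ (hB.inter hsgt)]
  have key : ∀ p : ℝ×ℝ×ℝ, (T2 ⁻¹' B ∩ {p : ℝ×ℝ×ℝ | p.1 ≤ p.2.1}ᶜ).indicator (rho a b) p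
      = (B ∩ {p : ℝ×ℝ×ℝ | p.1 ≤ p.2.1}ᶜ).indicator (rho2 a b) (T2 p) := by
    intro p
    have hmem : T2 p ∈ B ∩ {p : ℝ×ℝ×ℝ | p.1 ≤ p.2.1}ᶜ
        ↔ p ∈ T2 ⁻¹' B ∩ {p : ℝ×ℝ×ℝ | p.1 ≤ p.2.1}ᶜ := by
      simp only [mem_inter_iff, mem_preimage, mem_compl_iff, mem_setOf_eq, T2]
      constructor <;> (rintro ⟨h1, h2⟩; exact ⟨h1, fun hc => h2 (by linarith)⟩)
    have hval : rho2 a b (T2 p) = rho a b p := by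
      simp only [rho2, rho, T2]
      have : p.1 - p.2.1 + p.2.2 - p.2.2 + p.2.1 = p.1 := by ring
      rw [this]
    by_cases hp : p ∈ T2 ⁻¹' B ∩ {p : ℝ×ℝ×ℝ | p.1 ≤ p.2.1}ᶜ
    · rw [indicator_of_mem hp, indicator_of_mem (hmem.mpr hp), hval]
    · rw [indicator_of_notMem hp, indicator_of_notMem (fun h => hp (hmem.mp h))]
  calc ∫⁻ p in T2 ⁻¹' B ∩ {p : ℝ×ℝ×ℝ | p.1 ≤ p.2.1}ᶜ, rho a b p
      = ∫⁻ p, (T2 ⁻¹' B ∩ {p : ℝ×ℝ×ℝ | p.1 ≤ p.2.1}ᶜ).indicator (rho a b) p :=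
        (lintegral_indicator ((mpT2.measurable hB).inter hsgt) _).symm
    _ = ∫⁻ p, (B ∩ {p : ℝ×ℝ×ℝ | p.1 ≤ p.2.1}ᶜ).indicator (rho2 a b) (T2 p) := by
        exact lintegral_congr key
    _ = ∫⁻ q, (B ∩ {p : ℝ×ℝ×ℝ | p.1 ≤ p.2.1}ᶜ).indicator (rho2 a b) q :=
        mpT2.lintegral_comp (hrho2.indicator (hB.inter hsgt))
    _ = ∫⁻ q in B ∩ {p : ℝ×ℝ×ℝ | p.1 ≤ p.2.1}ᶜ, rho2 a b q :=
        lintegral_indicator (hB.inter hsgt) _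
    _ = ∫⁻ q in B ∩ {p : ℝ×ℝ×ℝ | p.1 ≤ p.2.1}ᶜ, rho a b q := by
        refine setLIntegral_congr_fun (hB.inter hsgt) (fun q hq => ?_)
        exact density_eq_gt ha hb (le_of_lt (lt_of_not_ge hq.2))

end BurkeAux

/-- The Burke-property map `(x, y, z) ↦ (x - x ∧ y + z, y - x ∧ y + z, x ∧ y)`. -/
noncomputable def burkeMap (p : ℝ × ℝ × ℝ) : ℝ × ℝ × ℝ :=
  (p.1 - min p.1 p.2.1 + p.2.2, p.2.1 - min p.1 p.2.1 + p.2.2, min p.1 p.2.1)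

/-- If `P` is the product of exponential distributions with rates `a`, `b`, `a + b`, then
`P` is invariant under the map `F(x,y,z) = (x - x∧y + z, y - x∧y + z, x∧y)`. -/
theorem burke_exponential (a b : ℝ) (ha : 0 < a) (hb : 0 < b)
    (P : Measure (ℝ × ℝ × ℝ))
    (hP : P = (expMeasure a).prod ((expMeasure b).prod (expMeasure (a + b)))) :
    ∀ B : Set (ℝ × ℝ × ℝ), MeasurableSet B → P (burkeMap ⁻¹' B) = P B := by
  open BurkeAux in
  intro B hB
  subst hP
  rw [P_eq a b ha hb]
  set μ := (volume : Measure (ℝ×ℝ×ℝ)).withDensity (rho a b) with hμ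
  have hsle := hsle_meas
  have hT1 : ∀ p : ℝ×ℝ×ℝ, p.1 ≤ p.2.1 → burkeMap p = T1 p := fun p h => by
    simp only [burkeMap, T1, min_eq_left h]
    exact Prod.ext (by ring) rfl
  have hT2 : ∀ p : ℝ×ℝ×ℝ, ¬ p.1 ≤ p.2.1 → burkeMap p = T2 p := fun p h => by
    simp only [burkeMap, T2, min_eq_right (le_of_lt (lt_of_not_ge h))]
    exact Prod.ext rfl (Prod.ext (by ring) rfl)
  have he1 : burkeMap ⁻¹' B ∩ {p : ℝ×ℝ×ℝ | p.1 ≤ p.2.1}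
      = T1 ⁻¹' B ∩ {p : ℝ×ℝ×ℝ | p.1 ≤ p.2.1} := by
    ext p
    simp only [Set.mem_inter_iff, Set.mem_preimage, Set.mem_setOf_eq]
    constructor
    · rintro ⟨h1, h2⟩; exact ⟨(hT1 p h2) ▸ h1, h2⟩
    · rintro ⟨h1, h2⟩; exact ⟨(hT1 p h2) ▸ h1, h2⟩
  have he2 : burkeMap ⁻¹' B ∩ {p : ℝ×ℝ×ℝ | p.1 ≤ p.2.1}ᶜ
      = T2 ⁻¹' B ∩ {p : ℝ×ℝ×ℝ | p.1 ≤ p.2.1}ᶜ := by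
    ext p
    simp only [Set.mem_inter_iff, Set.mem_preimage, Set.mem_compl_iff, Set.mem_setOf_eq]
    constructor
    · rintro ⟨h1, h2⟩; exact ⟨(hT2 p h2) ▸ h1, h2⟩
    · rintro ⟨h1, h2⟩; exact ⟨(hT2 p h2) ▸ h1, h2⟩
  calc μ (burkeMap ⁻¹' B)
      = μ (burkeMap ⁻¹' B ∩ {p : ℝ×ℝ×ℝ | p.1 ≤ p.2.1})
        + μ (burkeMap ⁻¹' B \ {p : ℝ×ℝ×ℝ | p.1 ≤ p.2.1}) :=
        (measure_inter_add_diff _ hsle).symm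
    _ = μ (T1 ⁻¹' B ∩ {p : ℝ×ℝ×ℝ | p.1 ≤ p.2.1})
        + μ (T2 ⁻¹' B ∩ {p : ℝ×ℝ×ℝ | p.1 ≤ p.2.1}ᶜ) := by
        rw [Set.diff_eq, he1, he2]
    _ = μ (B ∩ {p : ℝ×ℝ×ℝ | p.1 ≤ p.2.1}) + μ (B ∩ {p : ℝ×ℝ×ℝ | p.1 ≤ p.2.1}ᶜ) := by
        rw [half_le a b ha hb B hB, half_gt a b ha hb B hB]
    _ = μ B := by rw [← Set.diff_eq, measure_inter_add_diff _ hsle]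
end

section
/- Let $F:\mathbb{R}^3\to\mathbb{R}^3$ be the map $(x,y,z)\mapsto(x-x\wedge y+z,\ y-x\wedge y+z,\ x\wedge y)$, and let $P=P_1\otimes P_2\otimes P_3$ be a product measure on $\mathbb{Z}_+^3$ where $P_1,P_2,P_3$ are geometric distributions with parameters $a$, $b$, and $ab$ respectively, for some $a,b\in(0,1)$. Then $P(F^{-1}(B))=P(B)$ for every Borel set $B$. -/
open MeasureTheory ProbabilityTheory

/-- The Burke-property map on `ℤ₊³`: `(x, y, z) ↦ (x - x ∧ y + z, y - x ∧ y + z, x ∧ y)`. -/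
def burkeMapNat (p : ℕ × ℕ × ℕ) : ℕ × ℕ × ℕ :=
  (p.1 - min p.1 p.2.1 + p.2.2, p.2.1 - min p.1 p.2.1 + p.2.2, min p.1 p.2.1)

/-- The geometric distribution on `ℤ₊` with parameter `q ∈ (0,1)`, assigning mass
`(1-q) q^k` to `k`.  (In Mathlib's parametrization this is `geometricMeasure` with
success probability `1 - q`.) -/
noncomputable def geomMeasure (q : ℝ) (hq0 : 0 < q) (hq1 : q < 1) : Measure ℕ :=
  (geometricPMF (p := 1 - q) (by linarith) (by linarith)).toMeasure

lemma burkeMapNat_involutive : Function.Involutive burkeMapNat := by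
  rintro ⟨x, y, z⟩
  simp only [burkeMapNat]
  refine Prod.ext ?_ (Prod.ext ?_ ?_) <;> simp <;> omega

lemma geomMeasure_singleton (q : ℝ) (hq0 : 0 < q) (hq1 : q < 1) (k : ℕ) :
    geomMeasure q hq0 hq1 {k} = ENNReal.ofReal (q ^ k * (1 - q)) := by
  rw [geomMeasure, PMF.toMeasure_apply_singleton _ _ (measurableSet_singleton k)]
  show ENNReal.ofReal (geometricPMFReal (1 - q) k) = _
  rw [geometricPMFReal]
  norm_num

/-- If `P` is the product of geometric distributions with parameters `a`, `b`, `a*b`, then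
`P` is invariant under the map `F(x,y,z) = (x - x∧y + z, y - x∧y + z, x∧y)`. -/
theorem burke_geometric (a b : ℝ) (ha0 : 0 < a) (ha1 : a < 1) (hb0 : 0 < b) (hb1 : b < 1)
    (P : Measure (ℕ × ℕ × ℕ))
    (hP : P = (geomMeasure a ha0 ha1).prod
      ((geomMeasure b hb0 hb1).prod
        (geomMeasure (a * b) (mul_pos ha0 hb0)
          (by nlinarith)))) :
    ∀ B : Set (ℕ × ℕ × ℕ), MeasurableSet B → P (burkeMapNat ⁻¹' B) = P B := by
  haveI i1 : IsProbabilityMeasure (geomMeasure a ha0 ha1) := by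
    unfold geomMeasure; infer_instance
  haveI i2 : IsProbabilityMeasure (geomMeasure b hb0 hb1) := by
    unfold geomMeasure; infer_instance
  haveI i3 : IsProbabilityMeasure (geomMeasure (a * b) (mul_pos ha0 hb0)
      (by nlinarith)) := by
    unfold geomMeasure; infer_instance
  haveI : IsProbabilityMeasure (geomMeasure a ha0 ha1) := i1
  haveI : IsProbabilityMeasure (geomMeasure b hb0 hb1) := i2
  haveI : IsProbabilityMeasure (geomMeasure (a * b) (mul_pos ha0 hb0)
      (by nlinarith)) := i3
  have hnna : ∀ n : ℕ, 0 ≤ a ^ n * (1 - a) :=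
    fun n => mul_nonneg (pow_nonneg ha0.le n) (by linarith)
  have hnnb : ∀ n : ℕ, 0 ≤ b ^ n * (1 - b) :=
    fun n => mul_nonneg (pow_nonneg hb0.le n) (by linarith)
  have hnnab : ∀ n : ℕ, 0 ≤ (a * b) ^ n * (1 - a * b) :=
    fun n => mul_nonneg (pow_nonneg (mul_pos ha0 hb0).le n) (by nlinarith)
  have hsingle : ∀ p : ℕ × ℕ × ℕ, P {p} =
      ENNReal.ofReal (a ^ p.1 * (1 - a)) * (ENNReal.ofReal (b ^ p.2.1 * (1 - b)) *
        ENNReal.ofReal ((a * b) ^ p.2.2 * (1 - a * b))) := by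
    rintro ⟨x, y, z⟩
    have : ({(x, y, z)} : Set (ℕ × ℕ × ℕ)) = {x} ×ˢ ({y} ×ˢ {z}) := by
      ext ⟨u, v, w⟩; simp [Prod.ext_iff, and_assoc]
    rw [hP, this, Measure.prod_prod, Measure.prod_prod,
      geomMeasure_singleton, geomMeasure_singleton, geomMeasure_singleton]
  have hpt : ∀ p : ℕ × ℕ × ℕ, P {burkeMapNat p} = P {p} := by
    rintro ⟨x, y, z⟩
    rw [hsingle, hsingle]
    simp only [burkeMapNat]
    rw [← ENNReal.ofReal_mul (hnnb _), ← ENNReal.ofReal_mul (hnna _),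
      ← ENNReal.ofReal_mul (hnnb _), ← ENNReal.ofReal_mul (hnna _)]
    congr 1
    have h1 : a ^ (x - min x y + z) * a ^ (min x y) = a ^ x * a ^ z := by
      rw [← pow_add, ← pow_add]; congr 1; omega
    have h2 : b ^ (y - min x y + z) * b ^ (min x y) = b ^ y * b ^ z := by
      rw [← pow_add, ← pow_add]; congr 1; omega
    simp only [mul_pow]
    linear_combination ((1 - a) * (1 - b) * (1 - a * b) *
        (b ^ (y - min x y + z) * b ^ (min x y))) * h1 +
      ((1 - a) * (1 - b) * (1 - a * b) * (a ^ x * a ^ z)) * h2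
  intro B hB
  have hmeas : Measurable burkeMapNat := measurable_of_countable _
  have hmap : Measure.map burkeMapNat P = P := by
    refine MeasureTheory.Measure.ext_of_singleton fun p => ?_
    rw [Measure.map_apply hmeas (measurableSet_singleton p)]
    have : burkeMapNat ⁻¹' {p} = {burkeMapNat p} := by
      ext q
      simp only [Set.mem_preimage, Set.mem_singleton_iff]
      constructor
      · intro h; rw [← h, burkeMapNat_involutive q]
      · intro h; rw [h, burkeMapNat_involutive p]
    rw [this, hpt]
  calc P (burkeMapNat ⁻¹' B) = Measure.map burkeMapNat P B := by
        rw [Measure.map_apply hmeas hB]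
    _ = P B := by rw [hmap]
end

section
/- With $g$ as in the previous context ($g(s,t)=\inf_{z\in(-\underline{\alpha},\underline{\beta})}\{sA(z)+tB(z)\}$, $\underline{\alpha}+\underline{\beta}>0$), if $c_1<s_1/t_1,s_2/t_2<c_2$ and $(s_1,t_1)$ is not a scalar multiple of $(s_2,t_2)$, then $g(s_1+s_2,t_1+t_2)>g(s_1,t_1)+g(s_2,t_2)$; i.e., $g$ is strictly concave on the cone $\{(s,t): c_1<s/t<c_2\}$. -/
open MeasureTheory Set Filter
open scoped ENNReal Topology

lemma shape_hasDerivAt (μ : Measure ℝ) [IsProbabilityMeasure μ] (l : ℝ)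
    (hae : ∀ᵐ a ∂μ, l ≤ a) (z₀ : ℝ) (hz : -l < z₀) :
    HasDerivAt (fun z => ∫ a, (a + z)⁻¹ ∂μ) (-∫ a, ((a + z₀)⁻¹) ^ 2 ∂μ) z₀ := by
  have hε : (0:ℝ) < (l + z₀) / 2 := by linarith
  set ε := (l + z₀) / 2 with hεdef
  have key : ∀ a x : ℝ, l ≤ a → x ∈ Metric.ball z₀ ε → ε < a + x := by
    intro a x ha hx
    have := abs_lt.mp (mem_ball_iff_norm.mp hx)
    have : z₀ - ε < x := by linarith [this.1]
    have : l + (z₀ - ε) < a + x := by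
      apply add_lt_add_of_le_of_lt ha this
    calc ε = l + (z₀ - ε) := by rw [hεdef]; ring
    _ < a + x := this
  have meas : ∀ x : ℝ, AEStronglyMeasurable (fun a : ℝ => (a + x)⁻¹) μ :=
    fun x => ((measurable_id.add_const x).inv).aestronglyMeasurable
  have meas' : AEStronglyMeasurable (fun a : ℝ => -((a + z₀)⁻¹) ^ 2) μ := by
    exact ((((measurable_id.add_const z₀).inv).pow_const 2).neg).aestronglyMeasurable
  have hint : Integrable (fun a : ℝ => (a + z₀)⁻¹) μ := by
    refine Integrable.mono' (integrable_const (ε⁻¹)) (meas z₀) ?_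
    filter_upwards [hae] with a ha
    have h1 : ε < a + z₀ := key a z₀ ha (Metric.mem_ball_self hε)
    rw [Real.norm_eq_abs, abs_of_pos (inv_pos.mpr (hε.trans h1))]
    exact inv_anti₀ hε h1.le
  have hder := hasDerivAt_integral_of_dominated_loc_of_deriv_le (μ := μ)
      (F := fun x a => (a + x)⁻¹) (F' := fun x a => -((a + x)⁻¹) ^ 2)
      (bound := fun _ => (ε⁻¹) ^ 2) (Metric.ball_mem_nhds z₀ hε)
      (Filter.Eventually.of_forall meas) hint meas'
      ?_ (integrable_const _) ?_
  · have : (∫ a, -((a + z₀)⁻¹) ^ 2 ∂μ) = -∫ a, ((a + z₀)⁻¹) ^ 2 ∂μ := integral_neg _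
    rw [this] at hder
    exact hder.2
  · filter_upwards [hae] with a ha
    intro x hx
    have h1 : ε < a + x := key a x ha hx
    have h0 : (0:ℝ) < a + x := hε.trans h1
    rw [norm_neg, norm_pow, Real.norm_eq_abs, abs_of_pos (inv_pos.mpr h0)]
    gcongr
  · filter_upwards [hae] with a ha
    intro x hx
    have h0 : a + x ≠ 0 := ne_of_gt (hε.trans (key a x ha hx))
    have := ((hasDerivAt_id x).const_add a).inv h0
    convert this using 1
    · rfl
    · rfl
    · show -((a + x)⁻¹) ^ 2 = -1 / (a + x) ^ 2
      rw [neg_div, one_div, inv_pow]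


lemma psi_meas (μ : Measure ℝ) (z : ℝ) :
    Measurable (fun a : ℝ => ENNReal.ofReal (((a + z)⁻¹) ^ 2)) :=
  (ENNReal.measurable_ofReal).comp (((measurable_id.add_const z).inv).pow_const 2)

section
variable {μ : Measure ℝ} [IsProbabilityMeasure μ] {l : ℝ}

local notation "Ψ" => fun z => ∫⁻ a, ENNReal.ofReal (((a + z)⁻¹) ^ 2) ∂μ

variable (hae : ∀ᵐ a ∂μ, l ≤ a)
include hae

lemma psi_anti {z z' : ℝ} (hz : -l < z) (hzz : z ≤ z') : Ψ z' ≤ Ψ z := by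
  refine lintegral_mono_ae ?_
  filter_upwards [hae] with a ha
  apply ENNReal.ofReal_le_ofReal
  have h1 : (a + z')⁻¹ ≤ (a + z)⁻¹ := inv_anti₀ (by linarith) (by linarith)
  have h0 : (0:ℝ) ≤ (a + z')⁻¹ := by
    apply inv_nonneg.mpr; linarith
  exact pow_le_pow_left₀ h0 h1 2

lemma psi_le (z : ℝ) (hz : -l < z) : Ψ z ≤ ENNReal.ofReal (((l + z)⁻¹) ^ 2) := by
  have : Ψ z ≤ ∫⁻ _, ENNReal.ofReal (((l + z)⁻¹) ^ 2) ∂μ := by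
    refine lintegral_mono_ae ?_
    filter_upwards [hae] with a ha
    apply ENNReal.ofReal_le_ofReal
    have h1 : (a + z)⁻¹ ≤ (l + z)⁻¹ := inv_anti₀ (by linarith) (by linarith)
    have h0 : (0:ℝ) ≤ (a + z)⁻¹ := by apply inv_nonneg.mpr; linarith
    exact pow_le_pow_left₀ h0 h1 2
  simpa using this

lemma psi_lt_top (z : ℝ) (hz : -l < z) : Ψ z < ∞ :=
  lt_of_le_of_lt (psi_le hae z hz) ENNReal.ofReal_lt_top

lemma psi_pos (z : ℝ) (hz : -l < z) : 0 < Ψ z := by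
  rw [lintegral_pos_iff_support (psi_meas μ z)]
  have hsub : Ici l ⊆ Function.support fun a : ℝ =>
      ENNReal.ofReal (((a + z)⁻¹) ^ 2) := by
    intro a ha
    simp only [Function.mem_support, ne_eq, ENNReal.ofReal_eq_zero, not_le]
    have h0 : 0 < a + z := by simp only [mem_Ici] at ha; linarith
    positivity
  have h1 : μ (Ici l) = 1 := by
    rw [← prob_compl_eq_zero_iff (measurableSet_Ici)]
    rw [compl_Ici]
    rw [ae_iff] at hae
    simpa [Iio] using hae
  calc (0:ℝ≥0∞) < 1 := by norm_num
  _ = μ (Ici l) := h1.symm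
  _ ≤ _ := measure_mono hsub

omit hae in
lemma psi_integral_eq (z : ℝ) :
    ∫ a, ((a + z)⁻¹) ^ 2 ∂μ = (∫⁻ a, ENNReal.ofReal (((a + z)⁻¹) ^ 2) ∂μ).toReal := by
  have := integral_eq_lintegral_of_nonneg_ae (μ := μ) (f := fun a => ((a + z)⁻¹) ^ 2)
    (Filter.Eventually.of_forall fun a => by positivity)
    (((measurable_id'.add_const z).inv.pow_const 2).aestronglyMeasurable)
  simpa using this

lemma psi_cont (z₁ : ℝ) (hz₁ : -l < z₁) : Tendsto (fun z => Ψ z) (𝓝 z₁) (𝓝 (Ψ z₁)) := by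
  have hε : (0:ℝ) < (l + z₁) / 2 := by linarith
  set ε := (l + z₁) / 2 with hεdef
  have key : ∀ a x : ℝ, l ≤ a → x ∈ Metric.ball z₁ ε → ε < a + x := by
    intro a x ha hx
    have h := abs_lt.mp (mem_ball_iff_norm.mp hx)
    have h2 : z₁ - ε < x := by linarith [h.1]
    have h3 : l + (z₁ - ε) < a + x := add_lt_add_of_le_of_lt ha h2
    calc ε = l + (z₁ - ε) := by rw [hεdef]; ring
    _ < a + x := h3
  refine tendsto_lintegral_filter_of_dominated_convergence
    (fun _ => ENNReal.ofReal ((ε⁻¹) ^ 2)) (Filter.Eventually.of_forall fun z => psi_meas μ z)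
    ?_ (by simp) ?_
  · filter_upwards [Metric.ball_mem_nhds z₁ hε] with x hx
    filter_upwards [hae] with a ha
    apply ENNReal.ofReal_le_ofReal
    have h1 : ε < a + x := key a x ha hx
    have h2 : (a + x)⁻¹ ≤ ε⁻¹ := inv_anti₀ hε h1.le
    have h0 : (0:ℝ) ≤ (a + x)⁻¹ := by apply inv_nonneg.mpr; linarith
    exact pow_le_pow_left₀ h0 h2 2
  · filter_upwards [hae] with a ha
    have h0 : a + z₁ ≠ 0 := by have := key a z₁ ha (Metric.mem_ball_self hε); linarith
    exact (ENNReal.continuous_ofReal.tendsto _).comp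
      ((((continuous_const.add continuous_id).tendsto z₁).inv₀ (by simpa using h0)).pow 2)

lemma psi_sup (c : ℝ≥0∞) (hc : c < ∫⁻ a, ENNReal.ofReal (((a - l)⁻¹) ^ 2) ∂μ) :
    ∃ w : ℝ, -l < w ∧ c < Ψ w := by
  set f : ℕ → ℝ → ℝ≥0∞ := fun n a => ENNReal.ofReal (((a + (-l + ((n:ℝ)+1)⁻¹))⁻¹) ^ 2) with hf
  have hwpos : ∀ n : ℕ, (0:ℝ) < ((n:ℝ)+1)⁻¹ := fun n => by positivity
  have hmono : ∀ᵐ a ∂μ, Monotone fun n => f n a := by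
    filter_upwards [hae] with a ha
    intro n m hnm
    apply ENNReal.ofReal_le_ofReal
    have h1 : ((m:ℝ)+1)⁻¹ ≤ ((n:ℝ)+1)⁻¹ := by
      apply inv_anti₀ (by positivity)
      have := (Nat.cast_le (α := ℝ)).mpr hnm
      linarith
    have h2 : (0:ℝ) < a + (-l + ((m:ℝ)+1)⁻¹) := by linarith [hwpos m]
    have h3 : (a + (-l + ((n:ℝ)+1)⁻¹))⁻¹ ≤ (a + (-l + ((m:ℝ)+1)⁻¹))⁻¹ :=
      inv_anti₀ (by linarith) (by linarith)
    exact pow_le_pow_left₀ (by apply inv_nonneg.mpr; linarith) h3 2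
  have hsup : ∫⁻ a, ⨆ n, f n a ∂μ = ⨆ n, ∫⁻ a, f n a ∂μ :=
    lintegral_iSup' (fun n => (psi_meas μ _).aemeasurable) hmono
  have hge : (∫⁻ a, ENNReal.ofReal (((a - l)⁻¹) ^ 2) ∂μ) ≤ ∫⁻ a, ⨆ n, f n a ∂μ := by
    refine lintegral_mono_ae ?_
    filter_upwards [hae] with a ha
    rcases eq_or_lt_of_le ha with h | h
    · simp [← h]
    · have htd : Tendsto (fun n : ℕ => f n a) atTop
          (𝓝 (ENNReal.ofReal (((a - l)⁻¹) ^ 2))) := by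
        have h1 : Tendsto (fun n : ℕ => a + (-l + ((n:ℝ)+1)⁻¹)) atTop (𝓝 (a - l)) := by
          have h0 := tendsto_one_div_add_atTop_nhds_zero_nat (𝕜 := ℝ)
          simp only [one_div] at h0
          have h2 := (tendsto_const_nhds (x := a + -l) (f := atTop (α := ℕ))).add h0
          rw [add_zero] at h2
          simpa [sub_eq_add_neg, add_assoc] using h2
        exact (ENNReal.continuous_ofReal.tendsto _).comp
          ((h1.inv₀ (by intro h0; have := sub_eq_zero.mp h0; linarith)).pow 2)
      exact le_of_tendsto' htd (fun n => le_iSup (fun n => f n a) n)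
  have hlt : c < ⨆ n, ∫⁻ a, f n a ∂μ := lt_of_lt_of_le hc (le_trans hge (le_of_eq hsup))
  rw [lt_iSup_iff] at hlt
  obtain ⟨n, hn⟩ := hlt
  exact ⟨-l + ((n:ℝ)+1)⁻¹, by linarith [hwpos n], hn⟩

end

section Endpoints
variable {α β : Measure ℝ} [IsProbabilityMeasure α] [IsProbabilityMeasure β] {la lb : ℝ}
  (hsum : 0 < la + lb)
  (hαae : ∀ᵐ a ∂α, la ≤ a) (hβae : ∀ᵐ b ∂β, lb ≤ b)

local notation "ψ" => fun z => ∫⁻ a, ENNReal.ofReal (((a + z)⁻¹) ^ 2) ∂α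
local notation "φ" => fun z => ∫⁻ b, ENNReal.ofReal (((b + (-z))⁻¹) ^ 2) ∂β

include hsum hαae hβae

/-- near `lb`: eventually `s·ψ < t·φ` (in real terms). -/
lemma endpoint_right (s t : ℝ) (hs : 0 < s) (ht : 0 < t)
    (h : ENNReal.ofReal (s / t) <
      (∫⁻ b, ENNReal.ofReal (((b - lb)⁻¹) ^ 2) ∂β) /
      (∫⁻ a, ENNReal.ofReal (((a + lb)⁻¹) ^ 2) ∂α)) :
    ∃ v, -la < v ∧ v < lb ∧ ∀ z ∈ Ioo v lb,
      s * (∫⁻ a, ENNReal.ofReal (((a + z)⁻¹) ^ 2) ∂α).toReal <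
        t * (∫⁻ b, ENNReal.ofReal (((b + -z)⁻¹) ^ 2) ∂β).toReal := by
  have hlalb : -la < lb := by linarith
  have hψpos : 0 < ψ lb := psi_pos hαae lb hlalb
  have hψtop : ψ lb < ∞ := psi_lt_top hαae lb hlalb
  have hts : (ENNReal.ofReal t) ≠ 0 := by simp [ht, ht.le]
  have htt : (ENNReal.ofReal t) ≠ ∞ := ENNReal.ofReal_ne_top
  -- step 2: ofReal s * ψ lb < ofReal t * φ₀'
  have h2 : ENNReal.ofReal (s / t) * ψ lb <
      ∫⁻ b, ENNReal.ofReal (((b - lb)⁻¹) ^ 2) ∂β :=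
    (ENNReal.lt_div_iff_mul_lt (Or.inl hψpos.ne') (Or.inl hψtop.ne)).mp h
  have h3 : ENNReal.ofReal s * ψ lb <
      ENNReal.ofReal t * ∫⁻ b, ENNReal.ofReal (((b - lb)⁻¹) ^ 2) ∂β := by
    have hsdec : ENNReal.ofReal s = ENNReal.ofReal (s / t) * ENNReal.ofReal t := by
      rw [← ENNReal.ofReal_mul (by positivity)]
      rw [div_mul_cancel₀ _ ht.ne']
    calc ENNReal.ofReal s * ψ lb
        = ENNReal.ofReal (s / t) * ψ lb * ENNReal.ofReal t := by rw [hsdec]; ring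
      _ < (∫⁻ b, ENNReal.ofReal (((b - lb)⁻¹) ^ 2) ∂β) * ENNReal.ofReal t :=
          ENNReal.mul_lt_mul_left hts htt h2
      _ = _ := mul_comm _ _
  obtain ⟨c, hc1, hc2⟩ := exists_between h3
  -- step 5: eventually near lb : ofReal s * ψ z < c
  have htd : Filter.Tendsto (fun z => ENNReal.ofReal s * ψ z) (𝓝 lb)
      (𝓝 (ENNReal.ofReal s * ψ lb)) :=
    ENNReal.Tendsto.const_mul (psi_cont hαae lb hlalb) (Or.inr ENNReal.ofReal_ne_top)
  have hev : ∀ᶠ z in 𝓝 lb, ENNReal.ofReal s * ψ z < c :=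
    htd.eventually_lt_const hc1
  obtain ⟨δ, hδ, hball⟩ := Metric.eventually_nhds_iff.mp hev
  -- step 6: φ side
  have hc2' : c / ENNReal.ofReal t < ∫⁻ b, ENNReal.ofReal (((b - lb)⁻¹) ^ 2) ∂β :=
    (ENNReal.div_lt_iff (Or.inl hts) (Or.inl htt)).mpr
      (by rw [mul_comm] at hc2; exact hc2)
  obtain ⟨w, hw, hwlt⟩ := psi_sup hβae (c / ENNReal.ofReal t) hc2'
  -- v
  set v := max (max (-w) (lb - δ)) ((-la + lb) / 2) with hv
  have hvla : -la < v := lt_of_lt_of_le (by linarith) (le_max_right _ _)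
  have hvlb : v < lb := by
    apply max_lt (max_lt (by linarith) (by linarith)) (by linarith)
  refine ⟨v, hvla, hvlb, fun z hz => ?_⟩
  obtain ⟨hz1, hz2⟩ := hz
  have hzw : -z ≤ w := by
    have : -w ≤ v := le_trans (le_max_left _ _) (le_max_left _ _)
    linarith
  have hφz : c / ENNReal.ofReal t < φ z :=
    lt_of_lt_of_le hwlt (psi_anti hβae (by linarith) hzw)
  have hφfin : φ z < ∞ := psi_lt_top hβae (-z) (by linarith)
  have hψz : ENNReal.ofReal s * ψ z < c := by
    apply hball
    have : lb - δ ≤ v := le_trans (le_max_right _ _) (le_max_left _ _)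
    rw [Real.dist_eq, abs_lt]; constructor <;> [linarith; linarith]
  have hmain : ENNReal.ofReal s * ψ z < ENNReal.ofReal t * φ z := by
    refine lt_trans hψz ?_
    rw [ENNReal.div_lt_iff (Or.inl hts) (Or.inl htt)] at hφz
    rwa [mul_comm] at hφz
  have hrhs : ENNReal.ofReal t * φ z ≠ ∞ := ENNReal.mul_ne_top htt hφfin.ne
  have := (ENNReal.toReal_lt_toReal (ne_top_of_lt hmain) hrhs).mpr hmain
  rwa [ENNReal.toReal_mul, ENNReal.toReal_mul, ENNReal.toReal_ofReal hs.le,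
    ENNReal.toReal_ofReal ht.le] at this

/-- near `-la`: eventually `t·φ < s·ψ` (in real terms). -/
lemma endpoint_left (s t : ℝ) (hs : 0 < s) (ht : 0 < t)
    (h : (∫⁻ b, ENNReal.ofReal (((b + la)⁻¹) ^ 2) ∂β) /
      (∫⁻ a, ENNReal.ofReal (((a - la)⁻¹) ^ 2) ∂α) < ENNReal.ofReal (s / t)) :
    ∃ u, -la < u ∧ u < lb ∧ ∀ z ∈ Ioo (-la) u,
      t * (∫⁻ b, ENNReal.ofReal (((b + -z)⁻¹) ^ 2) ∂β).toReal <
        s * (∫⁻ a, ENNReal.ofReal (((a + z)⁻¹) ^ 2) ∂α).toReal := by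
  have hlalb : -lb < la := by linarith
  have hNpos : 0 < ∫⁻ b, ENNReal.ofReal (((b + la)⁻¹) ^ 2) ∂β := psi_pos hβae la hlalb
  have hNtop : (∫⁻ b, ENNReal.ofReal (((b + la)⁻¹) ^ 2) ∂β) < ∞ := psi_lt_top hβae la hlalb
  have hss : (ENNReal.ofReal s) ≠ 0 := by simp [hs, hs.le]
  have hst : (ENNReal.ofReal s) ≠ ∞ := ENNReal.ofReal_ne_top
  have hts : (ENNReal.ofReal t) ≠ 0 := by simp [ht, ht.le]
  have htt : (ENNReal.ofReal t) ≠ ∞ := ENNReal.ofReal_ne_top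
  set N := ∫⁻ b, ENNReal.ofReal (((b + la)⁻¹) ^ 2) ∂β with hN
  set P := ∫⁻ a, ENNReal.ofReal (((a - la)⁻¹) ^ 2) ∂α with hP
  -- key : ofReal t * N < ofReal s * P
  have h3 : ENNReal.ofReal t * N < ENNReal.ofReal s * P := by
    rcases eq_or_ne P 0 with h0 | h0
    · exfalso
      rw [h0, ENNReal.div_zero hNpos.ne'] at h
      exact not_top_lt h
    rcases eq_or_ne P ∞ with hPt | hPt
    · rw [hPt, ENNReal.mul_top hss]
      exact lt_of_lt_of_le (ENNReal.mul_lt_top htt.lt_top hNtop) le_top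
    · have h4 : N < ENNReal.ofReal (s / t) * P :=
        (ENNReal.div_lt_iff (Or.inl h0) (Or.inl hPt)).mp h
      have hsdec : ENNReal.ofReal s = ENNReal.ofReal (s / t) * ENNReal.ofReal t := by
        rw [← ENNReal.ofReal_mul (by positivity), div_mul_cancel₀ _ ht.ne']
      calc ENNReal.ofReal t * N < ENNReal.ofReal t * (ENNReal.ofReal (s / t) * P) :=
            ENNReal.mul_lt_mul_right hts htt h4
        _ = ENNReal.ofReal s * P := by rw [hsdec]; ring
  obtain ⟨c, hc1, hc2⟩ := exists_between h3
  -- tendsto of φ at -la (from ψ_β at la)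
  have htdβ : Filter.Tendsto (fun z : ℝ => φ z) (𝓝 (-la)) (𝓝 N) := by
    have h1 := psi_cont hβae la hlalb
    have h2 : Filter.Tendsto (fun z : ℝ => -z) (𝓝 (-la)) (𝓝 la) := by
      simpa using (continuous_neg.tendsto (-la))
    exact h1.comp h2
  have htd : Filter.Tendsto (fun z => ENNReal.ofReal t * φ z) (𝓝 (-la))
      (𝓝 (ENNReal.ofReal t * N)) :=
    ENNReal.Tendsto.const_mul htdβ (Or.inr htt)
  have hev : ∀ᶠ z in 𝓝 (-la), ENNReal.ofReal t * φ z < c := htd.eventually_lt_const hc1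
  obtain ⟨δ, hδ, hball⟩ := Metric.eventually_nhds_iff.mp hev
  -- ψ side via psi_sup
  have hc2' : c / ENNReal.ofReal s < P :=
    (ENNReal.div_lt_iff (Or.inl hss) (Or.inl hst)).mpr
      (by rw [mul_comm] at hc2; exact hc2)
  obtain ⟨w, hw, hwlt⟩ := psi_sup hαae (c / ENNReal.ofReal s) hc2'
  set u := min (min w (-la + δ)) ((-la + lb) / 2) with hu
  have hula : -la < u := by
    apply lt_min (lt_min (by linarith) (by linarith)) (by linarith)
  have hulb : u < lb := lt_of_le_of_lt (min_le_right _ _) (by linarith)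
  refine ⟨u, hula, hulb, fun z hz => ?_⟩
  obtain ⟨hz1, hz2⟩ := hz
  have hzw : z ≤ w := by
    have : u ≤ w := le_trans (min_le_left _ _) (min_le_left _ _)
    linarith
  have hψz : c / ENNReal.ofReal s < ψ z :=
    lt_of_lt_of_le hwlt (psi_anti hαae hz1 hzw)
  have hψfin : ψ z < ∞ := psi_lt_top hαae z hz1
  have hφz : ENNReal.ofReal t * φ z < c := by
    apply hball
    have : u ≤ -la + δ := le_trans (min_le_left _ _) (min_le_right _ _)
    rw [Real.dist_eq, abs_lt]; constructor <;> [linarith; linarith]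
  have hmain : ENNReal.ofReal t * φ z < ENNReal.ofReal s * ψ z := by
    refine lt_trans hφz ?_
    rw [ENNReal.div_lt_iff (Or.inl hss) (Or.inl hst)] at hψz
    rwa [mul_comm] at hψz
  have hrhs : ENNReal.ofReal s * ψ z ≠ ∞ := ENNReal.mul_ne_top hst hψfin.ne
  have := (ENNReal.toReal_lt_toReal (ne_top_of_lt hmain) hrhs).mpr hmain
  rwa [ENNReal.toReal_mul, ENNReal.toReal_mul, ENNReal.toReal_ofReal hs.le,
    ENNReal.toReal_ofReal ht.le] at this

end Endpoints

/-- Strict concavity of the shape function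
`g(s,t) = inf_z { s∫(a+z)⁻¹ dα + t∫(b-z)⁻¹ dβ }` on the cone `c₁ < s/t < c₂`. -/
theorem shape_strictly_concave
    (α β : Measure ℝ) [IsProbabilityMeasure α] [IsProbabilityMeasure β]
    (la lb : ℝ) (hla0 : 0 ≤ la) (hlb0 : 0 ≤ lb) (hsum : 0 < la + lb)
    (hαlt : α (Iio la) = 0) (hαnear : ∀ ε > 0, 0 < α (Ico la (la + ε)))
    (hβlt : β (Iio lb) = 0) (hβnear : ∀ ε > 0, 0 < β (Ico lb (lb + ε)))
    (A : ℝ → ℝ) (hA : ∀ z, A z = ∫ a, (a + z)⁻¹ ∂α)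
    (B : ℝ → ℝ) (hB : ∀ z, B z = ∫ b, (b - z)⁻¹ ∂β)
    (g : ℝ → ℝ → ℝ)
    (hg : ∀ s t, g s t = sInf ((fun z => s * A z + t * B z) '' Ioo (-la) lb))
    (c₁ c₂ : ℝ≥0∞)
    (hc₁ : c₁ = (∫⁻ b, ENNReal.ofReal (((b + la)⁻¹) ^ 2) ∂β) /
        (∫⁻ a, ENNReal.ofReal (((a - la)⁻¹) ^ 2) ∂α))
    (hc₂ : c₂ = (∫⁻ b, ENNReal.ofReal (((b - lb)⁻¹) ^ 2) ∂β) /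
        (∫⁻ a, ENNReal.ofReal (((a + lb)⁻¹) ^ 2) ∂α))
    (s₁ t₁ s₂ t₂ : ℝ) (hs₁ : 0 < s₁) (ht₁ : 0 < t₁) (hs₂ : 0 < s₂) (ht₂ : 0 < t₂)
    (h₁l : c₁ < ENNReal.ofReal (s₁ / t₁)) (h₁u : ENNReal.ofReal (s₁ / t₁) < c₂)
    (h₂l : c₁ < ENNReal.ofReal (s₂ / t₂)) (h₂u : ENNReal.ofReal (s₂ / t₂) < c₂)
    (hnp : ∀ k : ℝ, ¬ (s₁ = k * s₂ ∧ t₁ = k * t₂)) :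
    g s₁ t₁ + g s₂ t₂ < g (s₁ + s₂) (t₁ + t₂) := by
  have hlalb : -la < lb := by linarith
  have hαae : ∀ᵐ a ∂α, la ≤ a := by rw [ae_iff]; simp only [not_le]; exact hαlt
  have hβae : ∀ᵐ b ∂β, lb ≤ b := by rw [ae_iff]; simp only [not_le]; exact hβlt
  -- derivatives of A and B
  have hAder : ∀ z ∈ Ioo (-la) lb, HasDerivAt A
      (-(∫⁻ a, ENNReal.ofReal (((a + z)⁻¹) ^ 2) ∂α).toReal) z := by
    intro z hz
    have h1 := shape_hasDerivAt α la hαae z hz.1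
    rw [psi_integral_eq (μ := α)] at h1
    have h2 : A = fun z => ∫ a, (a + z)⁻¹ ∂α := funext hA
    rw [h2]; exact h1
  have hBder : ∀ z ∈ Ioo (-la) lb, HasDerivAt B
      ((∫⁻ b, ENNReal.ofReal (((b + -z)⁻¹) ^ 2) ∂β).toReal) z := by
    intro z hz
    have hzlt : -lb < -z := by have := hz.2; linarith
    have h1 := shape_hasDerivAt β lb hβae (-z) hzlt
    have h2 := h1.comp z (hasDerivAt_neg z)
    have h3 : B = (fun y => ∫ b, (b + y)⁻¹ ∂β) ∘ (fun z : ℝ => -z) := by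
      funext y; rw [hB y]; simp only [Function.comp_apply, sub_eq_add_neg]
    rw [h3]
    refine h2.congr_deriv ?_
    rw [psi_integral_eq (μ := β)]
    ring
  have hFder : ∀ (s t : ℝ), ∀ z ∈ Ioo (-la) lb,
      HasDerivAt (fun z => s * A z + t * B z)
        (s * (-(∫⁻ a, ENNReal.ofReal (((a + z)⁻¹) ^ 2) ∂α).toReal) +
         t * (∫⁻ b, ENNReal.ofReal (((b + -z)⁻¹) ^ 2) ∂β).toReal) z := by
    intro s t z hz
    exact (HasDerivAt.const_mul s (hAder z hz)).add (HasDerivAt.const_mul t (hBder z hz))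
  -- endpoint sign conditions
  rw [hc₁] at h₁l h₂l
  rw [hc₂] at h₁u h₂u
  obtain ⟨u₁, hu₁a, hu₁b, hu₁⟩ := endpoint_left hsum hαae hβae s₁ t₁ hs₁ ht₁ h₁l
  obtain ⟨u₂, hu₂a, hu₂b, hu₂⟩ := endpoint_left hsum hαae hβae s₂ t₂ hs₂ ht₂ h₂l
  obtain ⟨v₁, hv₁a, hv₁b, hv₁⟩ := endpoint_right hsum hαae hβae s₁ t₁ hs₁ ht₁ h₁u
  obtain ⟨v₂, hv₂a, hv₂b, hv₂⟩ := endpoint_right hsum hαae hβae s₂ t₂ hs₂ ht₂ h₂u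
  set l : ℝ := min (min u₁ u₂) (max v₁ v₂) with hldef
  set r : ℝ := max (min u₁ u₂) (max v₁ v₂) with hrdef
  have hla_l : -la < l := by
    apply lt_min (lt_min hu₁a hu₂a) (lt_max_of_lt_left hv₁a)
  have hl_lb : l < lb := lt_of_le_of_lt (min_le_left _ _)
    (lt_of_le_of_lt (min_le_left _ _) hu₁b)
  have hla_r : -la < r := lt_max_of_lt_left (lt_min hu₁a hu₂a)
  have hr_lb : r < lb := by
    apply max_lt (lt_of_le_of_lt (min_le_left _ _) hu₁b) (max_lt hv₁b hv₂b)
  have hlr : l ≤ r := min_le_max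
  have hIcc : Icc l r ⊆ Ioo (-la) lb := fun z hz =>
    ⟨lt_of_lt_of_le hla_l hz.1, lt_of_le_of_lt hz.2 hr_lb⟩
  -- minimizer of combined functional on [l, r]
  have hcont : ContinuousOn (fun z => (s₁ + s₂) * A z + (t₁ + t₂) * B z) (Icc l r) :=
    fun z hz => ((hFder (s₁+s₂) (t₁+t₂) z (hIcc hz)).continuousAt).continuousWithinAt
  obtain ⟨z₀, hz₀mem, hz₀min⟩ :=
    isCompact_Icc.exists_isMinOn (nonempty_Icc.mpr hlr) hcont
  have hz₀Ioo : z₀ ∈ Ioo (-la) lb := hIcc hz₀mem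
  -- global minimality on the open interval
  have hglob : ∀ z ∈ Ioo (-la) lb,
      (s₁ + s₂) * A z₀ + (t₁ + t₂) * B z₀ ≤ (s₁ + s₂) * A z + (t₁ + t₂) * B z := by
    intro z hz
    rcases lt_or_ge z l with h | h
    · have hanti : StrictAntiOn (fun z => (s₁ + s₂) * A z + (t₁ + t₂) * B z)
          (Ioc (-la) l) := by
        apply strictAntiOn_of_deriv_neg (convex_Ioc _ _)
        · intro y hy
          exact ((hFder (s₁+s₂) (t₁+t₂) y
            ⟨hy.1, lt_of_le_of_lt hy.2 hl_lb⟩).continuousAt).continuousWithinAt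
        · intro y hy
          rw [interior_Ioc] at hy
          rw [(hFder (s₁+s₂) (t₁+t₂) y ⟨hy.1, lt_trans hy.2 hl_lb⟩).deriv]
          have hy1 : y ∈ Ioo (-la) u₁ :=
            ⟨hy.1, lt_of_lt_of_le hy.2 (le_trans (min_le_left _ _) (min_le_left _ _))⟩
          have hy2 : y ∈ Ioo (-la) u₂ :=
            ⟨hy.1, lt_of_lt_of_le hy.2 (le_trans (min_le_left _ _) (min_le_right _ _))⟩
          have k1 := hu₁ y hy1
          have k2 := hu₂ y hy2
          nlinarith [k1, k2]
      have h1 : (fun z => (s₁ + s₂) * A z + (t₁ + t₂) * B z) l <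
          (fun z => (s₁ + s₂) * A z + (t₁ + t₂) * B z) z :=
        hanti ⟨hz.1, h.le⟩ ⟨hla_l, le_refl l⟩ h
      have h2 := isMinOn_iff.mp hz₀min l (left_mem_Icc.mpr hlr)
      simp only at h1 h2
      linarith
    rcases le_or_gt z r with h' | h'
    · exact isMinOn_iff.mp hz₀min z ⟨h, h'⟩
    · have hmono : StrictMonoOn (fun z => (s₁ + s₂) * A z + (t₁ + t₂) * B z)
          (Ico r lb) := by
        apply strictMonoOn_of_deriv_pos (convex_Ico _ _)
        · intro y hy
          exact ((hFder (s₁+s₂) (t₁+t₂) y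
            ⟨lt_of_lt_of_le hla_r hy.1, hy.2⟩).continuousAt).continuousWithinAt
        · intro y hy
          rw [interior_Ico] at hy
          rw [(hFder (s₁+s₂) (t₁+t₂) y ⟨lt_trans hla_r hy.1, hy.2⟩).deriv]
          have hy1 : y ∈ Ioo v₁ lb :=
            ⟨lt_of_le_of_lt (le_trans (le_max_left _ _) (le_max_right _ _)) hy.1, hy.2⟩
          have hy2 : y ∈ Ioo v₂ lb :=
            ⟨lt_of_le_of_lt (le_trans (le_max_right _ _) (le_max_right _ _)) hy.1, hy.2⟩
          have k1 := hv₁ y hy1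
          have k2 := hv₂ y hy2
          nlinarith [k1, k2]
      have h1 : (fun z => (s₁ + s₂) * A z + (t₁ + t₂) * B z) r <
          (fun z => (s₁ + s₂) * A z + (t₁ + t₂) * B z) z :=
        hmono ⟨le_refl r, hr_lb⟩ ⟨h'.le, hz.2⟩ h'
      have h2 := isMinOn_iff.mp hz₀min r (right_mem_Icc.mpr hlr)
      simp only at h1 h2
      linarith
  -- nonnegativity / bounded below
  have hA0 : ∀ z ∈ Ioo (-la) lb, 0 ≤ A z := by
    intro z hz; rw [hA]
    apply integral_nonneg_of_ae
    filter_upwards [hαae] with a ha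
    have h0 : 0 < a + z := by have := hz.1; linarith
    exact inv_nonneg.mpr h0.le
  have hB0 : ∀ z ∈ Ioo (-la) lb, 0 ≤ B z := by
    intro z hz; rw [hB]
    apply integral_nonneg_of_ae
    filter_upwards [hβae] with b hb
    have h0 : 0 < b - z := by have := hz.2; linarith
    exact inv_nonneg.mpr h0.le
  have hbdd : ∀ s t : ℝ, 0 < s → 0 < t →
      BddBelow ((fun z => s * A z + t * B z) '' Ioo (-la) lb) := by
    intro s t hs ht
    refine ⟨0, ?_⟩
    rintro x ⟨z, hz, rfl⟩
    exact add_nonneg (mul_nonneg hs.le (hA0 z hz)) (mul_nonneg ht.le (hB0 z hz))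
  have hgle : ∀ (s t : ℝ), 0 < s → 0 < t → ∀ z ∈ Ioo (-la) lb,
      g s t ≤ s * A z + t * B z := by
    intro s t hs ht z hz
    rw [hg]
    exact csInf_le (hbdd s t hs ht) ⟨z, hz, rfl⟩
  -- the combined infimum is attained at z₀
  have hgsum : g (s₁ + s₂) (t₁ + t₂) = (s₁ + s₂) * A z₀ + (t₁ + t₂) * B z₀ := by
    rw [hg]
    apply le_antisymm
    · exact csInf_le (hbdd _ _ (by linarith) (by linarith)) ⟨z₀, hz₀Ioo, rfl⟩
    · apply le_csInf (Set.Nonempty.image _ ⟨z₀, hz₀Ioo⟩)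
      rintro x ⟨z, hz, rfl⟩
      exact hglob z hz
  -- positivity of the derivative ingredients at z₀
  have hPpos : 0 < (∫⁻ a, ENNReal.ofReal (((a + z₀)⁻¹) ^ 2) ∂α).toReal :=
    ENNReal.toReal_pos (psi_pos hαae z₀ hz₀Ioo.1).ne' (psi_lt_top hαae z₀ hz₀Ioo.1).ne
  have hQpos : 0 < (∫⁻ b, ENNReal.ofReal (((b + -z₀)⁻¹) ^ 2) ∂β).toReal := by
    have hzlt : -lb < -z₀ := by have := hz₀Ioo.2; linarith
    exact ENNReal.toReal_pos (psi_pos hβae (-z₀) hzlt).ne' (psi_lt_top hβae (-z₀) hzlt).ne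
  -- z₀ cannot minimize both summands
  have hkey : ¬ ((s₁ * A z₀ + t₁ * B z₀ ≤ g s₁ t₁) ∧
      (s₂ * A z₀ + t₂ * B z₀ ≤ g s₂ t₂)) := by
    rintro ⟨h1, h2⟩
    have hder0 : ∀ s t : ℝ, 0 < s → 0 < t → (s * A z₀ + t * B z₀ ≤ g s t) →
        s * (∫⁻ a, ENNReal.ofReal (((a + z₀)⁻¹) ^ 2) ∂α).toReal =
        t * (∫⁻ b, ENNReal.ofReal (((b + -z₀)⁻¹) ^ 2) ∂β).toReal := by
      intro s t hs ht hle
      have hloc : IsLocalMin (fun z => s * A z + t * B z) z₀ := by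
        filter_upwards [isOpen_Ioo.mem_nhds hz₀Ioo] with z hz
        calc s * A z₀ + t * B z₀ ≤ g s t := hle
        _ ≤ s * A z + t * B z := hgle s t hs ht z hz
      have h0 := hloc.hasDerivAt_eq_zero (hFder s t z₀ hz₀Ioo)
      linarith [h0]
    have e1 := hder0 s₁ t₁ hs₁ ht₁ h1
    have e2 := hder0 s₂ t₂ hs₂ ht₂ h2
    apply hnp (t₁ / t₂)
    have h6 : (s₁ * t₂ - t₁ * s₂) *
        (∫⁻ a, ENNReal.ofReal (((a + z₀)⁻¹) ^ 2) ∂α).toReal = 0 := by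
      linear_combination t₂ * e1 - t₁ * e2
    have h5 : s₁ * t₂ = t₁ * s₂ := by
      rcases mul_eq_zero.mp h6 with h | h
      · linarith
      · exact absurd h hPpos.ne'
    constructor
    · field_simp
      linarith [h5]
    · field_simp
  -- conclusion
  have hle1 : g s₁ t₁ ≤ s₁ * A z₀ + t₁ * B z₀ := hgle s₁ t₁ hs₁ ht₁ z₀ hz₀Ioo
  have hle2 : g s₂ t₂ ≤ s₂ * A z₀ + t₂ * B z₀ := hgle s₂ t₂ hs₂ ht₂ z₀ hz₀Ioo
  have hstrict : g s₁ t₁ < s₁ * A z₀ + t₁ * B z₀ ∨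
      g s₂ t₂ < s₂ * A z₀ + t₂ * B z₀ := by
    by_contra hcc
    push_neg at hcc
    exact hkey ⟨hcc.1, hcc.2⟩
  rw [hgsum]
  have hsplit : (s₁ + s₂) * A z₀ + (t₁ + t₂) * B z₀ =
      (s₁ * A z₀ + t₁ * B z₀) + (s₂ * A z₀ + t₂ * B z₀) := by ring
  rw [hsplit]
  rcases hstrict with h | h
  · linarith
  · linarith
end

section
/- Let $\lambda,l,m>0$ and let $\alpha,\beta$ be the uniform distributions on $[\lambda/2,\lambda/2+l]$ and $[\lambda/2,\lambda/2+m]$ respectively. Then for $s,t>0$, $$\inf_{z\in(-\lambda/2,\lambda/2)}\left\{\frac{s}{l}\log\Big(1+\frac{l}{z+\lambda/2}\Big)+\frac{t}{m}\log\Big(1+\frac{m}{-z+\lambda/2}\Big)\right\}$$ equals $$\frac{s}{l}\log\left(1+\frac{l}{\lambda}+\frac{l}{\lambda}\cdot\frac{lt-ms+\sqrt{(lt-ms)^2+4st(\lambda+l)(\lambda+m)}}{2s(\lambda+m)}\right)+\frac{t}{m}\log\left(1+\frac{m}{\lambda}+\frac{m}{\lambda}\cdot\frac{ms-lt+\sqrt{(lt-ms)^2+4st(\lambda+l)(\lambda+m)}}{2t(\lambda+l)}\right).$$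 -/
open Set Real

private lemma shape_arg1 (lam l X : ℝ) (hlam : 0 < lam) (hX : 0 < X) :
    1 + l / (lam / (1 + X)) = 1 + l / lam + l / lam * X := by
  have h1X : (0:ℝ) < 1 + X := by linarith
  field_simp
  ring

private lemma shape_arg2 (lam m X Y : ℝ) (hlam : 0 < lam) (hX : 0 < X) (hXY : X * Y = 1) :
    1 + m / (lam * X / (1 + X)) = 1 + m / lam + m / lam * Y := by
  have h1X : (0:ℝ) < 1 + X := by linarith
  field_simp
  linear_combination (-m) * hXY

/-- Auxiliary lemma: the shape formula with abstract minimizer data.  Here `X` is the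
positive root of the quadratic `s(λ+m)X² = (lt-ms)X + t(λ+l)` and `Y = 1/X`. -/
theorem shape_uniform_aux (lam l m s t X Y : ℝ)
    (hlam : 0 < lam) (hl : 0 < l) (hm : 0 < m) (hs : 0 < s) (ht : 0 < t)
    (hXpos : 0 < X) (hYpos : 0 < Y)
    (keyX : s * (lam + m) * X ^ 2 = (l * t - m * s) * X + t * (lam + l))
    (hXY : X * Y = 1) :
    sInf ((fun z => s / l * Real.log (1 + l / (z + lam / 2))
        + t / m * Real.log (1 + m / (-z + lam / 2))) '' Ioo (-(lam / 2)) (lam / 2))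
      = s / l * Real.log (1 + l / lam + l / lam * X)
        + t / m * Real.log (1 + m / lam + m / lam * Y) := by
  obtain ⟨c, hc⟩ : ∃ c, c = lam / 2 := ⟨_, rfl⟩
  rw [← hc]
  have hc0 : 0 < c := by rw [hc]; positivity
  have h1X : 0 < 1 + X := by linarith
  obtain ⟨u, hu⟩ : ∃ u, u = lam / (1 + X) := ⟨_, rfl⟩
  have hupos : 0 < u := by rw [hu]; positivity
  have hult : u < lam := by
    rw [hu, div_lt_iff₀ h1X]; nlinarith
  obtain ⟨v, hv⟩ : ∃ v, v = lam - u := ⟨_, rfl⟩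
  have hvpos : 0 < v := by rw [hv]; linarith
  have hvX : v = lam * X / (1 + X) := by
    rw [hv, hu]; field_simp; ring
  have crit : t * u * (u + l) = s * v * (v + m) := by
    rw [hvX, hu]
    have h : (1 + X) ≠ 0 := ne_of_gt h1X
    field_simp
    ring_nf
    nlinarith [keyX, sq_nonneg X]
  obtain ⟨z0, hz0⟩ : ∃ z0, z0 = u - c := ⟨_, rfl⟩
  have hz0mem : z0 ∈ Ioo (-c) c := by
    constructor
    · rw [hz0]; rw [hc] at *; linarith
    · rw [hz0]; rw [hc] at *; linarith
  have hcz0u : z0 + c = u := by rw [hz0]; ring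
  have hcz0v : c - z0 = v := by rw [hz0, hv, hc]; ring
  -- the function and its smooth version
  obtain ⟨f, hf⟩ : ∃ f : ℝ → ℝ, f = fun z => s / l * Real.log (1 + l / (z + c))
      + t / m * Real.log (1 + m / (-z + c)) := ⟨_, rfl⟩
  rw [← hf]
  obtain ⟨F, hF⟩ : ∃ F : ℝ → ℝ, F = fun z => s / l * (Real.log (z + c + l) - Real.log (z + c))
      + t / m * (Real.log (c - z + m) - Real.log (c - z)) := ⟨_, rfl⟩
  obtain ⟨F', hF'⟩ : ∃ F' : ℝ → ℝ, F' = fun w => s / l * (1 / (w + c + l) - 1 / (w + c))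
      + t / m * ((-1) / (c - w + m) - (-1) / (c - w)) := ⟨_, rfl⟩
  have hfF : ∀ z ∈ Ioo (-c) c, f z = F z := by
    intro z hz
    have h1 : 0 < z + c := by have := hz.1; linarith
    have h2 : 0 < c - z := by have := hz.2; linarith
    rw [hf, hF]
    simp only
    rw [show (1 : ℝ) + l / (z + c) = (z + c + l) / (z + c) by field_simp,
      show (-z + c) = c - z by ring,
      show (1 : ℝ) + m / (c - z) = (c - z + m) / (c - z) by field_simp,
      Real.log_div (by positivity) (by positivity),
      Real.log_div (by positivity) (by positivity)]
  have hder : ∀ w ∈ Ioo (-c) c, HasDerivAt F (F' w) w := by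
    intro w hw
    have h1 : 0 < w + c := by have := hw.1; linarith
    have h2 : 0 < c - w := by have := hw.2; linarith
    have d1 : HasDerivAt (fun z : ℝ => Real.log (z + c + l)) (1 / (w + c + l)) w := by
      have := (((hasDerivAt_id w).add_const c).add_const l).log (by positivity)
      simpa using this
    have d2 : HasDerivAt (fun z : ℝ => Real.log (z + c)) (1 / (w + c)) w := by
      have := ((hasDerivAt_id w).add_const c).log (by positivity)
      simpa using this
    have d3 : HasDerivAt (fun z : ℝ => Real.log (c - z + m)) ((-1) / (c - w + m)) w := by
      have := (((hasDerivAt_id w).const_sub c).add_const m).log (by positivity)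
      simpa using this
    have d4 : HasDerivAt (fun z : ℝ => Real.log (c - z)) ((-1) / (c - w)) w := by
      have := ((hasDerivAt_id w).const_sub c).log (by positivity)
      simpa using this
    have := ((d1.sub d2).const_mul (s / l)).add ((d3.sub d4).const_mul (t / m))
    rw [hF, hF']
    exact this
  have hF'eq : ∀ w ∈ Ioo (-c) c,
      F' w = t / ((c - w) * (c - w + m)) - s / ((w + c) * (w + c + l)) := by
    intro w hw
    have h1 : 0 < w + c := by have := hw.1; linarith
    have h2 : 0 < c - w := by have := hw.2; linarith
    rw [hF']
    field_simp
    ring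
  -- sign of the derivative
  have hsign_le : ∀ w ∈ Ioo (-c) c, w ≤ z0 → F' w ≤ 0 := by
    intro w hw hwz
    have h1 : 0 < w + c := by have := hw.1; linarith
    have h2 : 0 < c - w := by have := hw.2; linarith
    have hwu : w + c ≤ u := by rw [← hcz0u]; linarith
    have hvw : v ≤ c - w := by rw [← hcz0v]; linarith
    rw [hF'eq w hw, sub_nonpos, div_le_div_iff₀ (by positivity) (by positivity)]
    have hA : (w + c) * (w + c + l) ≤ u * (u + l) :=
      mul_le_mul hwu (by linarith) (by linarith) hupos.le
    have hB : v * (v + m) ≤ (c - w) * (c - w + m) :=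
      mul_le_mul hvw (by linarith) (by linarith) (by linarith)
    have h3 := mul_le_mul_of_nonneg_left hA ht.le
    have h4 := mul_le_mul_of_nonneg_left hB hs.le
    linarith [crit, h3, h4]
  have hsign_ge : ∀ w ∈ Ioo (-c) c, z0 ≤ w → 0 ≤ F' w := by
    intro w hw hwz
    have h1 : 0 < w + c := by have := hw.1; linarith
    have h2 : 0 < c - w := by have := hw.2; linarith
    have hwu : u ≤ w + c := by rw [← hcz0u]; linarith
    have hvw : c - w ≤ v := by rw [← hcz0v]; linarith
    rw [hF'eq w hw, sub_nonneg, div_le_div_iff₀ (by positivity) (by positivity)]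
    have hA : u * (u + l) ≤ (w + c) * (w + c + l) :=
      mul_le_mul hwu (by linarith) (by linarith) (by linarith)
    have hB : (c - w) * (c - w + m) ≤ v * (v + m) :=
      mul_le_mul hvw (by linarith) (by linarith) hvpos.le
    have h3 := mul_le_mul_of_nonneg_left hA ht.le
    have h4 := mul_le_mul_of_nonneg_left hB hs.le
    linarith [crit, h3, h4]
  -- z0 is a global minimum on the interval
  have hmin : ∀ z ∈ Ioo (-c) c, f z0 ≤ f z := by
    intro z hz
    rw [hfF z0 hz0mem, hfF z hz]
    rcases lt_trichotomy z z0 with hlt | heq | hgt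
    · obtain ⟨w, hw, hweq⟩ := exists_hasDerivAt_eq_slope F F' hlt
        (fun x hx => (hder x ⟨lt_of_lt_of_le hz.1 hx.1,
          lt_of_le_of_lt hx.2 hz0mem.2⟩).continuousAt.continuousWithinAt)
        (fun x hx => hder x ⟨lt_trans hz.1 hx.1, lt_trans hx.2 hz0mem.2⟩)
      have hwmem : w ∈ Ioo (-c) c := ⟨lt_trans hz.1 hw.1, lt_trans hw.2 hz0mem.2⟩
      have hle := hsign_le w hwmem hw.2.le
      rw [hweq] at hle
      have hpos : 0 < z0 - z := by linarith
      rcases div_nonpos_iff.mp hle with ⟨h1, h2⟩ | ⟨h1, h2⟩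
      · linarith
      · linarith
    · rw [heq]
    · obtain ⟨w, hw, hweq⟩ := exists_hasDerivAt_eq_slope F F' hgt
        (fun x hx => (hder x ⟨lt_of_lt_of_le hz0mem.1 hx.1,
          lt_of_le_of_lt hx.2 hz.2⟩).continuousAt.continuousWithinAt)
        (fun x hx => hder x ⟨lt_trans hz0mem.1 hx.1, lt_trans hx.2 hz.2⟩)
      have hwmem : w ∈ Ioo (-c) c := ⟨lt_trans hz0mem.1 hw.1, lt_trans hw.2 hz.2⟩
      have hge := hsign_ge w hwmem hw.1.le
      rw [hweq] at hge
      have hpos : 0 < z - z0 := by linarith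
      rcases div_nonneg_iff.mp hge with ⟨h1, h2⟩ | ⟨h1, h2⟩
      · linarith
      · linarith
  have hinf : sInf (f '' Ioo (-c) c) = f z0 := by
    apply le_antisymm
    · exact csInf_le ⟨f z0, by rintro y ⟨z, hz, rfl⟩; exact hmin z hz⟩
        ⟨z0, hz0mem, rfl⟩
    · exact le_csInf ⟨f z0, z0, hz0mem, rfl⟩ (by rintro y ⟨z, hz, rfl⟩; exact hmin z hz)
  rw [hinf, hf]
  simp only
  have harg1 : 1 + l / (z0 + c) = 1 + l / lam + l / lam * X := by
    rw [hcz0u, hu]; exact shape_arg1 lam l X hlam hXpos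
  have harg2 : 1 + m / (-z0 + c) = 1 + m / lam + m / lam * Y := by
    rw [show -z0 + c = c - z0 by ring, hcz0v, hvX]
    exact shape_arg2 lam m X Y hlam hXpos hXY
  rw [harg1, harg2]

/-- Explicit formula for the shape function of the exponential model with uniform
parameter distributions on `[λ/2, λ/2 + l]` and `[λ/2, λ/2 + m]`. -/
theorem shape_uniform_explicit (lam l m s t : ℝ)
    (hlam : 0 < lam) (hl : 0 < l) (hm : 0 < m) (hs : 0 < s) (ht : 0 < t) :
    sInf ((fun z => s / l * Real.log (1 + l / (z + lam / 2))
        + t / m * Real.log (1 + m / (-z + lam / 2))) '' Ioo (-(lam / 2)) (lam / 2))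
      = s / l * Real.log (1 + l / lam + l / lam *
          ((l * t - m * s + Real.sqrt ((l * t - m * s) ^ 2
              + 4 * s * t * (lam + l) * (lam + m))) / (2 * s * (lam + m))))
        + t / m * Real.log (1 + m / lam + m / lam *
          ((m * s - l * t + Real.sqrt ((l * t - m * s) ^ 2
              + 4 * s * t * (lam + l) * (lam + m))) / (2 * t * (lam + l)))) := by
  have hDgt : (l * t - m * s) ^ 2 < (l * t - m * s) ^ 2
      + 4 * s * t * (lam + l) * (lam + m) := by
    have : 0 < 4 * s * t * (lam + l) * (lam + m) := by positivity
    linarith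
  have hD0 : 0 ≤ (l * t - m * s) ^ 2 + 4 * s * t * (lam + l) * (lam + m) :=
    le_trans (sq_nonneg _) hDgt.le
  have hsqD : Real.sqrt ((l * t - m * s) ^ 2 + 4 * s * t * (lam + l) * (lam + m)) ^ 2
      = (l * t - m * s) ^ 2 + 4 * s * t * (lam + l) * (lam + m) := Real.sq_sqrt hD0
  have habs : |l * t - m * s|
      < Real.sqrt ((l * t - m * s) ^ 2 + 4 * s * t * (lam + l) * (lam + m)) := by
    rw [← Real.sqrt_sq_eq_abs]
    exact Real.sqrt_lt_sqrt (sq_nonneg _) hDgt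
  have hN : 0 < l * t - m * s
      + Real.sqrt ((l * t - m * s) ^ 2 + 4 * s * t * (lam + l) * (lam + m)) := by
    have := neg_lt_of_abs_lt habs; linarith
  have hN2 : 0 < m * s - l * t
      + Real.sqrt ((l * t - m * s) ^ 2 + 4 * s * t * (lam + l) * (lam + m)) := by
    have := lt_of_abs_lt habs; linarith
  apply shape_uniform_aux lam l m s t _ _ hlam hl hm hs ht
  · exact div_pos hN (by positivity)
  · exact div_pos hN2 (by positivity)
  · generalize Real.sqrt ((l * t - m * s) ^ 2 + 4 * s * t * (lam + l) * (lam + m)) = S at hsqD ⊢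
    field_simp
    nlinarith [hsqD]
  · generalize Real.sqrt ((l * t - m * s) ^ 2 + 4 * s * t * (lam + l) * (lam + m)) = S at hsqD ⊢
    field_simp
    nlinarith [hsqD]
end

section
/- Let $p>0$, $q\ge 0$, $x\ge 0$, and $n,k\in\mathbb{Z}_+$ with $n>k$. Then $$\int_x^\infty\exp\{-pt^n+qt^k\}\,dt\le\frac{8}{p^{1/n}}\exp\left\{q^{n/(n-k)}\left(\frac{4k}{pn}\right)^{k/(n-k)}-\frac{px^n}{2}\right\}.$$ -/
open MeasureTheory Set Real

lemma gamma_le_one_aux {s : ℝ} (h1 : 1 ≤ s) (h2 : s ≤ 2) : Real.Gamma s ≤ 1 := by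
  have hc := Real.convexOn_Gamma.2 (mem_Ioi.mpr one_pos) (mem_Ioi.mpr two_pos)
    (show (0:ℝ) ≤ 2 - s by linarith) (show (0:ℝ) ≤ s - 1 by linarith) (by ring)
  have h : (2 - s) • (1:ℝ) + (s - 1) • (2:ℝ) = s := by simp only [smul_eq_mul]; ring
  rw [h] at hc
  calc Real.Gamma s ≤ (2 - s) • Real.Gamma 1 + (s - 1) • Real.Gamma 2 := hc
    _ = 1 := by rw [Real.Gamma_one, Real.Gamma_two]; simp only [smul_eq_mul]; ring

lemma young_key (p q : ℝ) (hp : 0 < p) (hq : 0 ≤ q)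
    (n k : ℕ) (hkn : k < n) (t : ℝ) (ht : 0 ≤ t) :
    q * t ^ k ≤ p / 4 * t ^ n +
      q ^ ((n : ℝ) / ((n : ℝ) - (k : ℝ)))
        * (4 * k / (p * n)) ^ ((k : ℝ) / ((n : ℝ) - (k : ℝ))) := by
  have hN : (0:ℝ) < n := by exact_mod_cast (by omega : 0 < n)
  have hNK : (0:ℝ) < (n:ℝ) - (k:ℝ) := by
    have : (k:ℝ) < n := by exact_mod_cast hkn
    linarith
  rcases Nat.eq_zero_or_pos k with hk0 | hk
  · subst hk0
    simp only [Nat.cast_zero, pow_zero, mul_one, zero_div, Real.rpow_zero, sub_zero]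
    rw [div_self hN.ne', Real.rpow_one]
    nlinarith [pow_nonneg ht n]
  · have hK : (0:ℝ) < k := by exact_mod_cast hk
    set Q : ℝ := q ^ ((n : ℝ) / ((n : ℝ) - (k : ℝ)))
        * (4 * k / (p * n)) ^ ((k : ℝ) / ((n : ℝ) - (k : ℝ))) with hQdef
    have hQnn : 0 ≤ Q := mul_nonneg (Real.rpow_nonneg hq _)
      (Real.rpow_nonneg (by positivity) _)
    rcases hq.eq_or_lt with hq0 | hq0
    · rw [← hq0]
      have : (0:ℝ) ≤ p / 4 * t ^ n := by positivity
      nlinarith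
    rcases ht.eq_or_lt with ht0 | ht0
    · rw [← ht0]
      rw [zero_pow (by omega), zero_pow (by omega)]
      simpa using hQnn
    -- main case: t > 0, q > 0, 1 ≤ k < n
    have hbase : (0:ℝ) < p * n / (4 * k) := by positivity
    set c : ℝ := (p * n / (4 * k)) ^ ((k:ℝ) / n) with hcdef
    have hc : 0 < c := Real.rpow_pos_of_pos hbase _
    have hconj : Real.HolderConjugate ((n:ℝ)/k) ((n:ℝ)/((n:ℝ)-k)) := by
      rw [Real.holderConjugate_iff]
      constructor
      · rw [lt_div_iff₀ hK]; simpa using (by exact_mod_cast hkn : (k:ℝ) < n)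
      · field_simp; ring
    have young := Real.young_inequality_of_nonneg
      (a := c * t ^ (k:ℝ)) (b := q / c)
      (by positivity) (by positivity) hconj
    have e1 : (k:ℝ)/(n:ℝ) * ((n:ℝ)/(k:ℝ)) = 1 := by
      rw [div_mul_div_comm, mul_comm (k:ℝ) (n:ℝ)]
      exact div_self (mul_pos hN hK).ne'
    have e2 : (k:ℝ) * ((n:ℝ)/(k:ℝ)) = (n:ℝ) := by
      rw [mul_comm, div_mul_cancel₀ _ hK.ne']
    have e3 : (k:ℝ)/(n:ℝ) * ((n:ℝ)/((n:ℝ)-(k:ℝ))) = (k:ℝ)/((n:ℝ)-(k:ℝ)) := by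
      rw [div_mul_div_comm, div_eq_div_iff (mul_pos hN hNK).ne' hNK.ne']
      ring
    have hab : c * t ^ (k:ℝ) * (q / c) = q * t ^ k := by
      rw [Real.rpow_natCast t k]
      field_simp
    have har : (c * t ^ (k:ℝ)) ^ ((n:ℝ)/k) / ((n:ℝ)/k) = p / 4 * t ^ n := by
      rw [Real.mul_rpow hc.le (Real.rpow_nonneg ht _), hcdef,
        ← Real.rpow_mul hbase.le, ← Real.rpow_mul ht, e1, e2, Real.rpow_one,
        ← Real.rpow_natCast t n]
      field_simp
    have hbs : (q / c) ^ ((n:ℝ)/((n:ℝ)-k)) / ((n:ℝ)/((n:ℝ)-k)) ≤ Q := by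
      have hsge : 1 ≤ (n:ℝ)/((n:ℝ)-k) := by
        rw [le_div_iff₀ hNK]; linarith
      have hbsval : (q / c) ^ ((n:ℝ)/((n:ℝ)-k)) = Q := by
        rw [Real.div_rpow hq (le_of_lt hc), hcdef,
          ← Real.rpow_mul hbase.le, e3]
        rw [hQdef, div_eq_mul_inv (q ^ _)]
        congr 1
        rw [← Real.inv_rpow hbase.le]
        congr 1
        rw [inv_div]
      rw [hbsval]
      exact div_le_self (hbsval ▸ Real.rpow_nonneg (by positivity) _) hsge
    rw [hab, har] at young
    linarith

/-- Laplace-type tail bound: for `p > 0`, `q ≥ 0`, `x ≥ 0` and integers `n > k ≥ 0`,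
`∫_x^∞ e^{-p tⁿ + q tᵏ} dt ≤ (8 / p^{1/n}) exp( q^{n/(n-k)} (4k/(pn))^{k/(n-k)} - p xⁿ / 2 )`. -/
theorem laplace_tail_bound (p q x : ℝ) (hp : 0 < p) (hq : 0 ≤ q) (hx : 0 ≤ x)
    (n k : ℕ) (hkn : k < n) :
    ∫ t in Ioi x, Real.exp (-p * t ^ n + q * t ^ k)
      ≤ 8 / p ^ ((n : ℝ)⁻¹) *
        Real.exp (q ^ ((n : ℝ) / ((n : ℝ) - (k : ℝ)))
          * (4 * k / (p * n)) ^ ((k : ℝ) / ((n : ℝ) - (k : ℝ)))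
          - p * x ^ n / 2) := by
  have hN : (0:ℝ) < n := by exact_mod_cast (by omega : 0 < n)
  have hN1 : (1:ℝ) ≤ n := by exact_mod_cast (by omega : 1 ≤ n)
  set N : ℝ := (n : ℝ) with hNdef
  set Q : ℝ := q ^ ((n : ℝ) / ((n : ℝ) - (k : ℝ)))
      * (4 * k / (p * n)) ^ ((k : ℝ) / ((n : ℝ) - (k : ℝ))) with hQdef
  set C : ℝ := Q - p * x ^ n / 2 with hCdef
  set g : ℝ → ℝ := fun t => Real.exp C * Real.exp (-(p/4) * t ^ N) with hgdef
  have hg0 : IntegrableOn g (Ioi 0) := by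
    have h1 : IntegrableOn (fun t : ℝ => Real.exp (-(p/4) * t ^ N)) (Ioi 0) := by
      have := integrableOn_rpow_mul_exp_neg_mul_rpow (p := N) (s := 0) (b := p/4)
        (by norm_num) hN (by positivity)
      simpa [Real.rpow_zero] using this
    exact h1.const_mul _
  have hgx : IntegrableOn g (Ioi x) := hg0.mono_set (Ioi_subset_Ioi hx)
  have hpt : ∀ t ∈ Ioi x, Real.exp (-p * t ^ n + q * t ^ k) ≤ g t := by
    intro t ht
    have htx : x < t := mem_Ioi.mp ht
    have ht0 : 0 < t := lt_of_le_of_lt hx htx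
    show Real.exp (-p * t ^ n + q * t ^ k) ≤ Real.exp C * Real.exp (-(p/4) * t ^ N)
    rw [← Real.exp_add, Real.exp_le_exp]
    have htN : t ^ N = t ^ n := Real.rpow_natCast t n
    rw [htN]
    have key := young_key p q hp hq n k hkn t ht0.le
    have hxt : x ^ n ≤ t ^ n := pow_le_pow_left₀ hx htx.le n
    have hxt' : p * x ^ n ≤ p * t ^ n := mul_le_mul_of_nonneg_left hxt hp.le
    linarith
  have hf_int : IntegrableOn (fun t => Real.exp (-p * t ^ n + q * t ^ k)) (Ioi x) := by
    refine Integrable.mono hgx ?_ ?_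
    · exact (Real.continuous_exp.comp (by continuity)).aestronglyMeasurable
    · rw [ae_restrict_iff' measurableSet_Ioi]
      refine Filter.Eventually.of_forall fun t ht => ?_
      rw [Real.norm_eq_abs, Real.norm_eq_abs, abs_of_pos (Real.exp_pos _),
        abs_of_pos (by positivity : (0:ℝ) < g t)]
      exact hpt t ht
  have hΓpos : 0 < Real.Gamma (1/N + 1) := by
    apply Real.Gamma_pos_of_pos
    positivity
  have h1N : 1/N ≤ 1 := by rw [div_le_one hN]; exact hN1
  have h1N0 : 0 < 1/N := by positivity
  have hΓ : Real.Gamma (1/N + 1) ≤ 1 := gamma_le_one_aux (by linarith) (by linarith)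
  have hbound : (p/4:ℝ) ^ (-1/N) * Real.Gamma (1/N + 1) ≤ 8 / p ^ (N⁻¹) := by
    have h4 : (1:ℝ)/4 ≤ (4:ℝ) ^ (-1/N) := by
      have h := Real.rpow_le_rpow_of_exponent_le (by norm_num : (1:ℝ) ≤ 4)
        (by rw [neg_div]; linarith : (-1:ℝ) ≤ -1/N)
      rwa [Real.rpow_neg_one, ← one_div] at h
    have hsplit : (p/4 : ℝ) ^ (-1/N) = p ^ (-1/N) / (4:ℝ) ^ (-1/N) :=
      Real.div_rpow hp.le (by norm_num) (-1/N)
    have hApos : (0:ℝ) ≤ p ^ (-1/N) := Real.rpow_nonneg hp.le _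
    have hple : (p/4 : ℝ) ^ (-1/N) ≤ 4 * p ^ (-1/N) := by
      rw [hsplit, div_le_iff₀ (lt_of_lt_of_le (by norm_num) h4)]
      nlinarith
    have hpinv : p ^ (-1/N) = (p ^ (N⁻¹))⁻¹ := by
      rw [neg_div, one_div, Real.rpow_neg hp.le]
    calc (p/4:ℝ) ^ (-1/N) * Real.Gamma (1/N + 1)
        ≤ (4 * p ^ (-1/N)) * 1 :=
          mul_le_mul hple hΓ hΓpos.le (by positivity)
      _ = 4 / p ^ (N⁻¹) := by rw [mul_one, hpinv, ← div_eq_mul_inv]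
      _ ≤ 8 / p ^ (N⁻¹) := by
          have : (0:ℝ) < p ^ (N⁻¹) := Real.rpow_pos_of_pos hp _
          gcongr
          norm_num
  calc ∫ t in Ioi x, Real.exp (-p * t ^ n + q * t ^ k)
      ≤ ∫ t in Ioi x, g t := setIntegral_mono_on hf_int hgx measurableSet_Ioi hpt
    _ ≤ ∫ t in Ioi 0, g t := by
        refine setIntegral_mono_set hg0 (Filter.Eventually.of_forall fun t => ?_)
          (HasSubset.Subset.eventuallyLE (Ioi_subset_Ioi hx))
        positivity
    _ = Real.exp C * ((p/4) ^ (-1/N) * Real.Gamma (1/N + 1)) := by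
        simp only [hgdef]
        rw [MeasureTheory.integral_const_mul,
          integral_exp_neg_mul_rpow hN (by positivity : (0:ℝ) < p/4)]
    _ ≤ Real.exp C * (8 / p ^ (N⁻¹)) :=
        mul_le_mul_of_nonneg_left hbound (Real.exp_pos C).le
    _ = 8 / p ^ (N⁻¹) * Real.exp C := mul_comm _ _
end
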